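/- arXiv:math/0601693 — 8 statements merged into one kernel-verified Lean document; each statement's English description precedes it below -/
import Mathlib

section
/- Let x = (i,j) and y = (i',j) with i < i' be an attacking pair in the same row j ≥ 1 of the augmented diagram of μ. If μ_i > μ_{i'}, then (u, y, x) is a triple where u = (i, j+1), and x is not in arm(y); if μ_i ≤ μ_{i'}, then (y, x, d(y)) is a triple, and y is not in arm((i,j+1)). -/
open Finset

noncomputable section
attribute [local instance] Classical.propDecidable

/-- `u` lies in the column diagram of the composition `μ` (columns `1,…,n`). -/
def dgIn (n : ℕ) (μ : ℕ → ℕ) (u : ℕ × ℕ) : Prop :=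
  1 ≤ u.1 ∧ u.1 ≤ n ∧ 1 ≤ u.2 ∧ u.2 ≤ μ u.1

/-- `u` lies in the augmented diagram of `μ` (row `0` added). -/
def augIn (n : ℕ) (μ : ℕ → ℕ) (u : ℕ × ℕ) : Prop :=
  1 ≤ u.1 ∧ u.1 ≤ n ∧ u.2 ≤ μ u.1

/-- The column diagram of `μ` as a finite set. -/
def dgF (n : ℕ) (μ : ℕ → ℕ) : Finset (ℕ × ℕ) :=
  (Finset.Icc 1 n).biUnion (fun i => (Finset.Icc 1 (μ i)).image (fun j => (i, j)))

/-- The augmented diagram of `μ` as a finite set. -/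
def augF (n : ℕ) (μ : ℕ → ℕ) : Finset (ℕ × ℕ) :=
  (Finset.Icc 1 n).biUnion (fun i => (Finset.Icc 0 (μ i)).image (fun j => (i, j)))

/-- The box directly below `u`. -/
def dbox (u : ℕ × ℕ) : ℕ × ℕ := (u.1, u.2 - 1)

/-- `v` belongs to the arm of `u` (left arm or right arm). -/
def armIn (n : ℕ) (μ : ℕ → ℕ) (u v : ℕ × ℕ) : Prop :=
  (dgIn n μ v ∧ v.2 = u.2 ∧ v.1 < u.1 ∧ μ v.1 ≤ μ u.1) ∨
  (augIn n μ v ∧ v.2 + 1 = u.2 ∧ u.1 < v.1 ∧ μ v.1 < μ u.1)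

/-- The arm of `u` as a finite set. -/
def armF (n : ℕ) (μ : ℕ → ℕ) (u : ℕ × ℕ) : Finset (ℕ × ℕ) :=
  (augF n μ).filter (fun v => armIn n μ u v)

/-- The leg length `l(u) = μ_i - j`. -/
def legLen (μ : ℕ → ℕ) (u : ℕ × ℕ) : ℕ := μ u.1 - u.2

/-- The arm length `a(u) = |arm(u)|`. -/
def armLen (n : ℕ) (μ : ℕ → ℕ) (u : ℕ × ℕ) : ℕ := (armF n μ u).card

/-- Two distinct boxes attack each other: same row, or consecutive rows with
the lower box strictly to the right. -/
def attacks (u v : ℕ × ℕ) : Prop :=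
  u ≠ v ∧ (u.2 = v.2 ∨ (u.2 = v.2 + 1 ∧ u.1 < v.1) ∨ (v.2 = u.2 + 1 ∧ v.1 < u.1))

/-- Reading order: rows top to bottom, right to left within a row. -/
def rlt (u v : ℕ × ℕ) : Prop := v.2 < u.2 ∨ (u.2 = v.2 ∧ v.1 < u.1)

/-- The augmented filling: value `i` in the row-0 box `(i,0)`. -/
def augOf (σ : ℕ × ℕ → ℕ) : ℕ × ℕ → ℕ := fun u => if u.2 = 0 then u.1 else σ u

/-- The (augmented) filling is non-attacking. -/
def NonAttacking (n : ℕ) (μ : ℕ → ℕ) (σh : ℕ × ℕ → ℕ) : Prop :=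
  ∀ u v : ℕ × ℕ, augIn n μ u → augIn n μ v → attacks u v → σh u ≠ σh v

/-- The set of inversions of an augmented filling: attacking pairs,
earlier box (in reading order) having the larger entry. -/
def invF (n : ℕ) (μ : ℕ → ℕ) (σh : ℕ × ℕ → ℕ) : Finset ((ℕ × ℕ) × (ℕ × ℕ)) :=
  ((augF n μ) ×ˢ (augF n μ)).filter
    (fun p => attacks p.1 p.2 ∧ rlt p.1 p.2 ∧ σh p.2 < σh p.1)

/-- The descent set of an augmented filling. -/
def desF (n : ℕ) (μ : ℕ → ℕ) (σh : ℕ × ℕ → ℕ) : Finset (ℕ × ℕ) :=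
  (dgF n μ).filter (fun u => σh (dbox u) < σh u)

/-- maj = sum of `l(u)+1` over descents. -/
def majStat (n : ℕ) (μ : ℕ → ℕ) (σh : ℕ × ℕ → ℕ) : ℕ :=
  ∑ u ∈ desF n μ σh, (legLen μ u + 1)

/-- `χ_{xy} = 1` iff the earlier box in reading order carries the larger entry. -/
def chi (σh : ℕ × ℕ → ℕ) (x y : ℕ × ℕ) : ℕ :=
  if (rlt x y ∧ σh y < σh x) ∨ (rlt y x ∧ σh x < σh y) then 1 else 0

/-- Triples `(u, v, d(u))`, encoded by the pair `(u, v)` with `v ∈ arm(u)`. -/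
def triplesF (n : ℕ) (μ : ℕ → ℕ) : Finset ((ℕ × ℕ) × (ℕ × ℕ)) :=
  ((dgF n μ) ×ˢ (augF n μ)).filter (fun p => armIn n μ p.1 p.2)

/-- Inversion triples: `χ_{uv} + χ_{vw} - χ_{uw} = 1` where `w = d(u)`. -/
def invTriplesF (n : ℕ) (μ : ℕ → ℕ) (σh : ℕ × ℕ → ℕ) : Finset ((ℕ × ℕ) × (ℕ × ℕ)) :=
  (triplesF n μ).filter
    (fun p => chi σh p.1 p.2 + chi σh p.2 (dbox p.1) = chi σh p.1 (dbox p.1) + 1)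

/-- Co-inversion triples: `χ_{uv} + χ_{vw} - χ_{uw} = 0` where `w = d(u)`. -/
def coinvTriplesF (n : ℕ) (μ : ℕ → ℕ) (σh : ℕ × ℕ → ℕ) : Finset ((ℕ × ℕ) × (ℕ × ℕ)) :=
  (triplesF n μ).filter
    (fun p => chi σh p.1 p.2 + chi σh p.2 (dbox p.1) = chi σh p.1 (dbox p.1))

/-- coinv = number of co-inversion triples. -/
def coinvStat (n : ℕ) (μ : ℕ → ℕ) (σh : ℕ × ℕ → ℕ) : ℕ := (coinvTriplesF n μ σh).card

/-- `σ` is a filling of `μ`, i.e. takes values in `[n]` on the diagram. -/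
def IsFilling (n : ℕ) (μ : ℕ → ℕ) (σ : ℕ × ℕ → ℕ) : Prop :=
  ∀ u : ℕ × ℕ, dgIn n μ u → 1 ≤ σ u ∧ σ u ≤ n

lemma dgIn_of_augIn {n : ℕ} {μ : ℕ → ℕ} {u : ℕ × ℕ} (hu : augIn n μ u) (h : 1 ≤ u.2) :
    dgIn n μ u :=
  ⟨hu.1, hu.2.1, h, hu.2.2⟩

lemma dgIn_succ_of_augIn {n : ℕ} {μ : ℕ → ℕ} {i j : ℕ} (hu : augIn n μ (i, j)) (h : j < μ i) :
    dgIn n μ (i, j + 1) :=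
  ⟨hu.1, hu.2.1, Nat.le_add_left 1 j, h⟩

lemma dbox_succ (i j : ℕ) : dbox (i, j + 1) = (i, j) := rfl

lemma armIn_of_left {n : ℕ} {μ : ℕ → ℕ} {i i' j : ℕ} (hv : dgIn n μ (i, j)) (hii' : i < i')
    (hμ : μ i ≤ μ i') : armIn n μ (i', j) (i, j) :=
  Or.inl ⟨hv, rfl, hii', hμ⟩

lemma armIn_of_right {n : ℕ} {μ : ℕ → ℕ} {i i' j : ℕ} (hv : augIn n μ (i', j)) (hii' : i < i')
    (hμ : μ i' < μ i) : armIn n μ (i, j + 1) (i', j) :=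
  Or.inr ⟨hv, rfl, hii', hμ⟩

lemma not_armIn_same_row {n : ℕ} {μ : ℕ → ℕ} {i i' j : ℕ} (hμ : μ i' < μ i) :
    ¬ armIn n μ (i', j) (i, j) := by
  rintro (⟨-, -, -, hle⟩ | ⟨-, hrow, -, -⟩)
  · exact (not_le.mpr hμ) hle
  · exact Nat.succ_ne_self j hrow

lemma not_armIn_row_below {n : ℕ} {μ : ℕ → ℕ} {i i' j : ℕ} (hμ : μ i ≤ μ i') :
    ¬ armIn n μ (i, j + 1) (i', j) := by
  rintro (⟨-, hrow, -, -⟩ | ⟨-, -, -, hlt⟩)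
  · exact Nat.succ_ne_self j hrow.symm
  · exact (not_lt.mpr hμ) hlt

/-- for an attacking pair `x = (i,j)`, `y = (i',j)` in the same
row `j ≥ 1`, with `i < i'`: if `μ_i > μ_{i'}` then `((i,j+1), y, x)` is a triple
and `x ∉ arm(y)`; if `μ_i ≤ μ_{i'}` then `(y, x, d(y))` is a triple and
`y ∉ arm((i,j+1))`. -/
theorem same_row_attacking_triple (n : ℕ) (μ : ℕ → ℕ) (i i' j : ℕ)
    (hii' : i < i') (hj : 1 ≤ j)
    (hx : augIn n μ (i, j)) (hy : augIn n μ (i', j)) :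
    (μ i' < μ i →
      (dgIn n μ (i, j + 1) ∧ armIn n μ (i, j + 1) (i', j) ∧
        dbox (i, j + 1) = (i, j)) ∧
      ¬ armIn n μ (i', j) (i, j)) ∧
    (μ i ≤ μ i' →
      (dgIn n μ (i', j) ∧ armIn n μ (i', j) (i, j)) ∧
      ¬ armIn n μ (i, j + 1) (i', j)) := by
  constructor
  · intro hμ
    exact ⟨⟨dgIn_succ_of_augIn hx (hy.2.2.trans_lt hμ), armIn_of_right hy hii' hμ, dbox_succ i j⟩,
      not_armIn_same_row hμ⟩
  · intro hμ
    exact ⟨⟨dgIn_of_augIn hy hj, armIn_of_left (dgIn_of_augIn hx hj) hii' hμ⟩,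
      not_armIn_row_below hμ⟩
end
end

section
/- For any filling σ of the column diagram of a composition μ, the number of inversion triples of the augmented filling equals inv(σ̂) := |Inv(σ̂)| − |{(i,j) : i < j, μ_i ≤ μ_j}| − Σ_{u ∈ Des(σ̂)} a(u). -/
open Finset

noncomputable section
attribute [local instance] Classical.propDecidable

/-!
Every attacking pair `(x, y)` of the augmented diagram, with `x` first in reading order, arises in
exactly one way: as `(u, v)` or as `(v, d(u))` for a triple `(u, v, d(u))`, or as a pair of row-`0`
boxes `((j, 0), (i, 0))` with `i < j` and `μ i ≤ μ j`. The last kind is always an inversion, since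
`σ̂ (i, 0) = i`. Hence `|Inv σ̂|` is the sum of `χ_{uv} + χ_{v d(u)}` over triples plus the number of
such pairs `i < j`. On the other hand `[inversion triple] + χ_{u d(u)} = χ_{uv} + χ_{v d(u)}` for each
triple, and summing `χ_{u d(u)}` over the triples counts each descent `u` exactly `a(u)` times.
-/

lemma mem_dgF {n : ℕ} {μ : ℕ → ℕ} {u : ℕ × ℕ} : u ∈ dgF n μ ↔ dgIn n μ u := by
  simp only [dgF, dgIn, mem_biUnion, mem_image, mem_Icc]
  constructor
  · rintro ⟨i, ⟨h1, h2⟩, j, ⟨h3, h4⟩, rfl⟩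
    exact ⟨h1, h2, h3, h4⟩
  · rintro ⟨h1, h2, h3, h4⟩
    exact ⟨u.1, ⟨h1, h2⟩, u.2, ⟨h3, h4⟩, rfl⟩

lemma mem_augF {n : ℕ} {μ : ℕ → ℕ} {u : ℕ × ℕ} : u ∈ augF n μ ↔ augIn n μ u := by
  simp only [augF, augIn, mem_biUnion, mem_image, mem_Icc]
  constructor
  · rintro ⟨i, ⟨h1, h2⟩, j, ⟨-, h4⟩, rfl⟩
    exact ⟨h1, h2, h4⟩
  · rintro ⟨h1, h2, h3⟩
    exact ⟨u.1, ⟨h1, h2⟩, u.2, ⟨Nat.zero_le _, h3⟩, rfl⟩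

lemma chi_of_rlt (σh : ℕ × ℕ → ℕ) {x y : ℕ × ℕ} (h : rlt x y) :
    chi σh x y = if σh y < σh x then 1 else 0 := by
  have h' : ¬ rlt y x := by unfold rlt at *; omega
  by_cases hc : σh y < σh x <;> simp [chi, h, h', hc]

def attackingPairs (n : ℕ) (μ : ℕ → ℕ) : Finset ((ℕ × ℕ) × (ℕ × ℕ)) :=
  ((augF n μ) ×ˢ (augF n μ)).filter (fun p => attacks p.1 p.2 ∧ rlt p.1 p.2)

/-- The attacking pairs in row `0` that do not come from a triple. -/
def rowZeroPairs (n : ℕ) (μ : ℕ → ℕ) : Finset ((ℕ × ℕ) × (ℕ × ℕ)) :=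
  (attackingPairs n μ).filter (fun q => q.1.2 = 0 ∧ μ q.2.1 ≤ μ q.1.1)

/-- The pair `(v, d(u))` of the triple `(u, v, d(u))`. -/
def lowerPair (p : (ℕ × ℕ) × (ℕ × ℕ)) : (ℕ × ℕ) × (ℕ × ℕ) := (p.2, dbox p.1)

lemma mem_attackingPairs {n : ℕ} {μ : ℕ → ℕ} {q : (ℕ × ℕ) × (ℕ × ℕ)} :
    q ∈ attackingPairs n μ ↔
      (augIn n μ q.1 ∧ augIn n μ q.2) ∧ attacks q.1 q.2 ∧ rlt q.1 q.2 := by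
  rw [attackingPairs, mem_filter, mem_product, mem_augF, mem_augF]

lemma mem_triplesF {n : ℕ} {μ : ℕ → ℕ} {p : (ℕ × ℕ) × (ℕ × ℕ)} :
    p ∈ triplesF n μ ↔ (dgIn n μ p.1 ∧ augIn n μ p.2) ∧ armIn n μ p.1 p.2 := by
  rw [triplesF, mem_filter, mem_product, mem_dgF, mem_augF]

lemma rlt_of_mem_triplesF {n : ℕ} {μ : ℕ → ℕ} {p : (ℕ × ℕ) × (ℕ × ℕ)}
    (hp : p ∈ triplesF n μ) :
    rlt p.1 p.2 ∧ rlt p.2 (dbox p.1) ∧ rlt p.1 (dbox p.1) := by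
  obtain ⟨⟨hu, hv⟩, harm⟩ := mem_triplesF.mp hp
  unfold dgIn augIn armIn rlt dbox at *
  omega

lemma attackingPairs_eq_union (n : ℕ) (μ : ℕ → ℕ) :
    attackingPairs n μ =
      (triplesF n μ ∪ (triplesF n μ).image lowerPair) ∪ rowZeroPairs n μ := by
  ext ⟨⟨u1, u2⟩, v1, v2⟩
  simp only [mem_union, mem_image, mem_attackingPairs, mem_triplesF, rowZeroPairs, mem_filter,
    augIn, dgIn, armIn, attacks, rlt, dbox, lowerPair, ne_eq, Prod.ext_iff, not_and]
  constructor
  -- A pair `(x, y)` that is not itself a triple is `lowerPair` of the triple `(y', x)`, where `y'`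
  -- is the box above `y`.
  · rintro ⟨⟨hu, hv⟩, hat, hr⟩
    by_cases hrow : u2 = v2
    · by_cases hμ : μ v1 ≤ μ u1
      · by_cases h0 : u2 = 0
        · exact Or.inr ⟨⟨⟨hu, hv⟩, hat, hr⟩, h0, hμ⟩
        · left; left; omega
      · refine Or.inl (Or.inr ⟨((v1, u2 + 1), (u1, u2)), ?_, ?_⟩) <;> dsimp only <;> omega
    · by_cases hμ : μ v1 < μ u1
      · left; left; omega
      · refine Or.inl (Or.inr ⟨((v1, v2 + 1), (u1, u2)), ?_, ?_⟩) <;> dsimp only <;> omega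
  · rintro ((h | ⟨⟨⟨a1, a2⟩, b1, b2⟩, hp, hfp⟩) | hL)
    · omega
    · dsimp only at hp hfp
      obtain ⟨⟨rfl, rfl⟩, rfl, rfl⟩ := hfp
      omega
    · exact hL.1

lemma lowerPair_injOn (n : ℕ) (μ : ℕ → ℕ) : Set.InjOn lowerPair (triplesF n μ) := by
  rintro ⟨⟨a1, a2⟩, b1, b2⟩ hp ⟨⟨c1, c2⟩, d1, d2⟩ hp' hf
  simp only [mem_coe, mem_triplesF, dgIn, augIn, armIn, lowerPair, dbox, Prod.mk.injEq]
    at hp hp' hf ⊢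
  omega

lemma disjoint_triplesF_image_lowerPair (n : ℕ) (μ : ℕ → ℕ) :
    Disjoint (triplesF n μ) ((triplesF n μ).image lowerPair) := by
  rw [disjoint_left]
  rintro q hq hq'
  obtain ⟨⟨⟨a1, a2⟩, b1, b2⟩, hp, rfl⟩ := mem_image.mp hq'
  simp only [mem_triplesF, dgIn, augIn, armIn, lowerPair, dbox] at hq hp
  omega

lemma disjoint_triplesF_union_rowZeroPairs (n : ℕ) (μ : ℕ → ℕ) :
    Disjoint (triplesF n μ ∪ (triplesF n μ).image lowerPair) (rowZeroPairs n μ) := by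
  rw [disjoint_left]
  rintro q hq hq'
  rcases mem_union.mp hq with hq | hq
  · simp only [mem_triplesF, dgIn, augIn, armIn, rowZeroPairs, mem_filter] at hq hq'
    omega
  · obtain ⟨⟨⟨a1, a2⟩, b1, b2⟩, hp, rfl⟩ := mem_image.mp hq
    simp only [mem_triplesF, dgIn, augIn, armIn, rowZeroPairs, mem_filter, lowerPair, dbox]
      at hp hq'
    omega

lemma card_rowZeroPairs (n : ℕ) (μ : ℕ → ℕ) :
    (rowZeroPairs n μ).card =
      (((Icc 1 n) ×ˢ (Icc 1 n)).filter (fun p => p.1 < p.2 ∧ μ p.1 ≤ μ p.2)).card := by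
  refine card_bij' (fun q _ => (q.2.1, q.1.1)) (fun p _ => ((p.2, 0), (p.1, 0))) ?_ ?_ ?_ ?_
  · rintro ⟨⟨u1, u2⟩, v1, v2⟩ hq
    simp only [rowZeroPairs, mem_filter, mem_attackingPairs, augIn, attacks, rlt] at hq
    simp only [mem_filter, mem_product, mem_Icc]
    omega
  · rintro ⟨i, j⟩ hp
    simp only [mem_filter, mem_product, mem_Icc] at hp
    simp only [rowZeroPairs, mem_filter, mem_attackingPairs, augIn, attacks, rlt, ne_eq,
      Prod.mk.injEq, true_and, and_true, true_or]
    omega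
  · rintro ⟨⟨u1, u2⟩, v1, v2⟩ hq
    simp only [rowZeroPairs, mem_filter, mem_attackingPairs, augIn, attacks, rlt] at hq
    simp only [Prod.mk.injEq, true_and]
    omega
  · intro _ _
    rfl

lemma chi_augOf_of_mem_rowZeroPairs {n : ℕ} {μ : ℕ → ℕ} (σ : ℕ × ℕ → ℕ)
    {q : (ℕ × ℕ) × (ℕ × ℕ)} (hq : q ∈ rowZeroPairs n μ) :
    chi (augOf σ) q.1 q.2 = 1 := by
  obtain ⟨⟨-, -, hr⟩, h0, -⟩ := mem_filter.mp hq |>.imp_left mem_attackingPairs.mp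
  have h' : q.2.2 = 0 ∧ q.2.1 < q.1.1 := by unfold rlt at hr; omega
  simp [chi_of_rlt _ hr, augOf, h0, h'.1, h'.2]

lemma card_invF_eq_sum_chi (n : ℕ) (μ : ℕ → ℕ) (σh : ℕ × ℕ → ℕ) :
    (invF n μ σh).card = ∑ q ∈ attackingPairs n μ, chi σh q.1 q.2 := by
  have hinv : invF n μ σh = (attackingPairs n μ).filter (fun q => σh q.2 < σh q.1) := by
    simp only [invF, attackingPairs, filter_filter, and_assoc]
  rw [hinv, card_filter]
  exact sum_congr rfl fun q hq => (chi_of_rlt σh (mem_attackingPairs.mp hq).2.2).symm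

lemma card_invF_augOf (n : ℕ) (μ : ℕ → ℕ) (σ : ℕ × ℕ → ℕ) :
    (invF n μ (augOf σ)).card =
      ∑ p ∈ triplesF n μ, (chi (augOf σ) p.1 p.2 + chi (augOf σ) p.2 (dbox p.1)) +
      (((Icc 1 n) ×ˢ (Icc 1 n)).filter (fun p => p.1 < p.2 ∧ μ p.1 ≤ μ p.2)).card := by
  rw [card_invF_eq_sum_chi, attackingPairs_eq_union,
    sum_union (disjoint_triplesF_union_rowZeroPairs n μ),
    sum_union (disjoint_triplesF_image_lowerPair n μ), sum_image (lowerPair_injOn n μ),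
    sum_add_distrib, ← card_rowZeroPairs, card_eq_sum_ones (rowZeroPairs n μ)]
  congr 1
  exact sum_congr rfl fun q hq => chi_augOf_of_mem_rowZeroPairs σ hq

lemma sum_triplesF_chi_dbox (n : ℕ) (μ : ℕ → ℕ) (σh : ℕ × ℕ → ℕ) :
    ∑ p ∈ triplesF n μ, chi σh p.1 (dbox p.1) = ∑ u ∈ desF n μ σh, armLen n μ u := by
  rw [triplesF, sum_filter, sum_product, desF, sum_filter]
  refine sum_congr rfl fun u hu => ?_
  have hr : rlt u (dbox u) := by
    have := mem_dgF.mp hu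
    unfold dgIn at this
    unfold rlt dbox
    omega
  rw [← sum_filter]
  dsimp only
  rw [sum_const, chi_of_rlt σh hr]
  split_ifs <;> simp [armLen, armF]

/-- Termwise, `[inversion triple] + χ_{u d(u)} = χ_{uv} + χ_{v d(u)}`. -/
lemma card_invTriplesF_add_sum_chi_dbox (n : ℕ) (μ : ℕ → ℕ) (σh : ℕ × ℕ → ℕ) :
    (invTriplesF n μ σh).card + ∑ p ∈ triplesF n μ, chi σh p.1 (dbox p.1) =
      ∑ p ∈ triplesF n μ, (chi σh p.1 p.2 + chi σh p.2 (dbox p.1)) := by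
  rw [invTriplesF, card_filter, ← sum_add_distrib]
  refine sum_congr rfl fun p hp => ?_
  obtain ⟨h1, h2, h3⟩ := rlt_of_mem_triplesF hp
  rw [chi_of_rlt _ h1, chi_of_rlt _ h2, chi_of_rlt _ h3]
  split_ifs <;> omega

theorem invTriples_card_eq_general (n : ℕ) (μ : ℕ → ℕ) (σ : ℕ × ℕ → ℕ) :
    ((invTriplesF n μ (augOf σ)).card : ℤ) =
      ((invF n μ (augOf σ)).card : ℤ) -
        (((Finset.Icc 1 n) ×ˢ (Finset.Icc 1 n)).filter
            (fun p => p.1 < p.2 ∧ μ p.1 ≤ μ p.2)).card -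
        ∑ u ∈ desF n μ (augOf σ), (armLen n μ u : ℤ) := by
  have htriples := card_invTriplesF_add_sum_chi_dbox n μ (augOf σ)
  rw [sum_triplesF_chi_dbox] at htriples
  have hinv := card_invF_augOf n μ σ
  rw [← Nat.cast_sum]
  omega

/-- for any filling `σ` of the column diagram of `μ`, the number of
inversion triples of the augmented filling equals
`|Inv(σ̂)| - |{i<j : μ_i ≤ μ_j}| - Σ_{u ∈ Des(σ̂)} a(u)`. -/
theorem invTriples_card_eq (n : ℕ) (μ : ℕ → ℕ) (σ : ℕ × ℕ → ℕ)
    (hσ : IsFilling n μ σ) :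
    ((invTriplesF n μ (augOf σ)).card : ℤ) =
      ((invF n μ (augOf σ)).card : ℤ) -
        (((Finset.Icc 1 n) ×ˢ (Finset.Icc 1 n)).filter
            (fun p => p.1 < p.2 ∧ μ p.1 ≤ μ p.2)).card -
        ∑ u ∈ desF n μ (augOf σ), (armLen n μ u : ℤ) :=
  invTriples_card_eq_general n μ σ
end
end

section
/- The cyclic shift map π on the augmented diagram, defined by π((i,j)) = (i+1,j) for i < n and π((n,j)) = (1,j+1), maps the augmented diagram of μ into the augmented diagram of π(μ) = (μ_n + 1, μ_1, …, μ_{n−1}), and for u ∈ dg'(μ), v ∈ hat-dg(μ): v ∈ arm(u) if and only if π(v) ∈ arm(π(u)). -/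
open Finset

noncomputable section
attribute [local instance] Classical.propDecidable

/-- `π` on compositions: `π(μ) = (μ_n+1, μ_1, …, μ_{n-1})`. -/
def piComp (n : ℕ) (μ : ℕ → ℕ) : ℕ → ℕ := fun i => if i = 1 then μ n + 1 else μ (i - 1)

/-- `π` on boxes: `(i,j) ↦ (i+1,j)` for `i < n`, `(n,j) ↦ (1,j+1)`. -/
def piBox (n : ℕ) (u : ℕ × ℕ) : ℕ × ℕ := if u.1 < n then (u.1 + 1, u.2) else (1, u.2 + 1)

/-- `π` on values: `k ↦ k+1` for `k < n`, `n ↦ 1`. -/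
def piVal (n k : ℕ) : ℕ := if k < n then k + 1 else 1

/-! Number the boxes of `ℕ × [1, n]` row by row, `(i, j) ↦ n j + i`. Then `π` is the successor
map of this numbering, and the arm of `u` consists of those of the `n - 1` boxes preceding `u`
whose column is below the column of `u` in the order "by height `μ_i`, then by index `i`".
Passing from `μ` to `π(μ)` moves column `n` to the front and raises it by one, which keeps
this order of the columns, so `π` preserves arms. -/

namespace PiBox

variable {n : ℕ} {μ : ℕ → ℕ}

def boxPos (n : ℕ) (u : ℕ × ℕ) : ℕ := n * u.2 + u.1

def colKey (μ : ℕ → ℕ) (i : ℕ) : Lex (ℕ × ℕ) := toLex (μ i, i)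

lemma piBox_of_lt {i : ℕ} (j : ℕ) (h : i < n) : piBox n (i, j) = (i + 1, j) := if_pos h

lemma piBox_self (j : ℕ) : piBox n (n, j) = (1, j + 1) := if_neg (lt_irrefl n)

lemma piComp_one : piComp n μ 1 = μ n + 1 := if_pos rfl

lemma piComp_succ {i : ℕ} (hi : 1 ≤ i) : piComp n μ (i + 1) = μ i := by
  unfold piComp
  rw [if_neg (by omega), Nat.add_sub_cancel]

lemma augIn_piBox {u : ℕ × ℕ} (hu : augIn n μ u) : augIn n (piComp n μ) (piBox n u) := by
  obtain ⟨i, j⟩ := u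
  obtain ⟨hi, hin, hj⟩ := hu
  rcases hin.lt_or_eq with hlt | rfl
  · rw [piBox_of_lt j hlt]
    exact ⟨by omega, hlt, by rwa [piComp_succ hi]⟩
  · rw [piBox_self, augIn, piComp_one]
    exact ⟨le_rfl, hi, by simpa using hj⟩

lemma le_piBox_snd (u : ℕ × ℕ) : u.2 ≤ (piBox n u).2 := by
  unfold piBox; split_ifs <;> simp

lemma dgIn_iff {u : ℕ × ℕ} : dgIn n μ u ↔ augIn n μ u ∧ 1 ≤ u.2 := by
  unfold dgIn augIn; tauto

lemma dgIn_piBox {u : ℕ × ℕ} (hu : dgIn n μ u) : dgIn n (piComp n μ) (piBox n u) := by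
  rw [dgIn_iff] at hu ⊢
  exact ⟨augIn_piBox hu.1, hu.2.trans (le_piBox_snd u)⟩

lemma boxPos_piBox {u : ℕ × ℕ} (hu : u.1 ≤ n) : boxPos n (piBox n u) = boxPos n u + 1 := by
  obtain ⟨i, j⟩ := u
  rcases hu.lt_or_eq with hlt | rfl
  · simp only [piBox_of_lt j hlt, boxPos, add_assoc]
  · simp only [piBox_self, boxPos]; ring

lemma colKey_piBox_lt_iff {u v : ℕ × ℕ} (hu : 1 ≤ u.1 ∧ u.1 ≤ n) (hv : 1 ≤ v.1 ∧ v.1 ≤ n) :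
    colKey (piComp n μ) (piBox n v).1 < colKey (piComp n μ) (piBox n u).1 ↔
      colKey μ v.1 < colKey μ u.1 := by
  obtain ⟨i, j⟩ := u
  obtain ⟨k, l⟩ := v
  simp only at hu hv
  rcases hu.2.lt_or_eq with hi | hi <;> rcases hv.2.lt_or_eq with hk | hk
  · simp only [piBox_of_lt j hi, piBox_of_lt l hk, piComp_succ hu.1, piComp_succ hv.1,
      colKey, Prod.Lex.toLex_lt_toLex]
    omega
  · subst k
    simp only [piBox_of_lt j hi, piBox_self, piComp_succ hu.1, piComp_one,
      colKey, Prod.Lex.toLex_lt_toLex]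
    omega
  · subst i
    simp only [piBox_of_lt l hk, piBox_self, piComp_succ hv.1, piComp_one,
      colKey, Prod.Lex.toLex_lt_toLex]
    omega
  · subst i k
    simp only [piBox_self, lt_irrefl]

lemma armIn_iff {u v : ℕ × ℕ} (hu : dgIn n μ u) :
    armIn n μ u v ↔ augIn n μ v ∧ boxPos n v < boxPos n u ∧ boxPos n u < boxPos n v + n ∧
      colKey μ v.1 < colKey μ u.1 := by
  obtain ⟨i, j⟩ := u
  obtain ⟨k, l⟩ := v
  obtain ⟨hi, hin, hj, -⟩ := hu
  simp only [armIn, dgIn_iff, boxPos, colKey, Prod.Lex.toLex_lt_toLex]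
  constructor
  · rintro (⟨⟨hv, -⟩, rfl, hk, hμ⟩ | ⟨hv, rfl, hk, hμ⟩) <;> have ⟨hk₁, hkn, _⟩ := hv
    · exact ⟨hv, by omega, by omega, by omega⟩
    · refine ⟨hv, ?_, ?_, Or.inl hμ⟩ <;> rw [mul_add] <;> omega
  · rintro ⟨hv, hlt, hgt, hμ⟩
    have ⟨hk₁, hkn, _⟩ := hv
    have hlj : l < j + 1 := Nat.lt_of_mul_lt_mul_left (a := n) (by rw [mul_add]; omega)
    have hjl : j < l + 2 := Nat.lt_of_mul_lt_mul_left (a := n) (by rw [mul_add]; omega)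
    rcases (show l = j ∨ l + 1 = j by omega) with rfl | rfl
    · left; exact ⟨⟨hv, hj⟩, rfl, by omega, by omega⟩
    · right; rw [mul_add] at hlt hgt; exact ⟨hv, rfl, by omega, by omega⟩

end PiBox

open PiBox in
theorem piBox_arm_general (n : ℕ) (μ : ℕ → ℕ) :
    (∀ u : ℕ × ℕ, augIn n μ u → augIn n (piComp n μ) (piBox n u)) ∧
    (∀ u v : ℕ × ℕ, dgIn n μ u → augIn n μ v →
      (armIn n μ u v ↔ armIn n (piComp n μ) (piBox n u) (piBox n v))) := by
  refine ⟨fun u => augIn_piBox, fun u v hu hv => ?_⟩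
  rw [armIn_iff hu, armIn_iff (dgIn_piBox hu), boxPos_piBox hu.2.1, boxPos_piBox hv.2.1,
    colKey_piBox_lt_iff ⟨hu.1, hu.2.1⟩ ⟨hv.1, hv.2.1⟩]
  simp only [hv, augIn_piBox hv, true_and, Nat.add_lt_add_iff_right, add_right_comm _ 1 n]

/-- `π` maps the augmented diagram of `μ` into that of `π(μ)`,
and `v ∈ arm(u)` iff `π(v) ∈ arm(π(u))`. -/
theorem piBox_arm (n : ℕ) (μ : ℕ → ℕ) (hn : 1 ≤ n) :
    (∀ u : ℕ × ℕ, augIn n μ u → augIn n (piComp n μ) (piBox n u)) ∧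
    (∀ u v : ℕ × ℕ, dgIn n μ u → augIn n μ v →
      (armIn n μ u v ↔ armIn n (piComp n μ) (piBox n u) (piBox n v))) :=
  piBox_arm_general n μ
end
end

section
/- In any non-attacking filling of π(μ) = (μ_n+1, μ_1, …, μ_{n−1}), the box (1,1) must be filled with the value 1; consequently σ ↦ ^πσ is a bijection from non-attacking fillings of μ to non-attacking fillings of π(μ). -/
/-!
The box `(1,1)` of `π(μ)` and the row-`0` box `(k,0)` attack each other whenever `k > 1`
(consecutive rows, the lower box strictly to the right); since `σ̂((k,0)) = k`, the entry of
`(1,1)` can only be `1`.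

On boxes, `π` carries the augmented diagram of `μ` into that of `π(μ)` and preserves attacking
pairs in both directions, while on values it is a cyclic shift of `[n]`; hence `σ ↦ ^πσ` and the
map `τ ↦ π⁻¹ ∘ τ ∘ π` both preserve non-attacking fillings. The latter is compatible with the
augmentation at the box `(n,0) ↦ (1,1)` exactly because that box of `τ` holds `1`, and the two
maps are mutually inverse.
-/

open Finset

noncomputable section
attribute [local instance] Classical.propDecidable

/-- Inverse of `π` on boxes. -/
def piBoxInv (n : ℕ) (v : ℕ × ℕ) : ℕ × ℕ :=
  if v.1 = 1 then (n, v.2 - 1) else (v.1 - 1, v.2)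

/-- The map `σ ↦ ^πσ` on (canonically extended) fillings. -/
def piFillC (n : ℕ) (μ : ℕ → ℕ) (σ : ℕ × ℕ → ℕ) : ℕ × ℕ → ℕ :=
  fun v => if dgIn n (piComp n μ) v then piVal n (augOf σ (piBoxInv n v)) else 0

/-- The set of non-attacking fillings of `ν` (normalized to vanish off the diagram). -/
def NAFillings (n : ℕ) (ν : ℕ → ℕ) : Set (ℕ × ℕ → ℕ) :=
  {σ | IsFilling n ν σ ∧ (∀ u : ℕ × ℕ, ¬ dgIn n ν u → σ u = 0) ∧
       NonAttacking n ν (augOf σ)}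

def piValInv (n k : ℕ) : ℕ := if k = 1 then n else k - 1

def piFillInv (n : ℕ) (μ : ℕ → ℕ) (τ : ℕ × ℕ → ℕ) : ℕ × ℕ → ℕ :=
  fun u => if dgIn n μ u then piValInv n (τ (piBox n u)) else 0

section Values

variable {n k : ℕ}

theorem piVal_mem_Icc (hk : k ∈ Set.Icc 1 n) : piVal n k ∈ Set.Icc 1 n := by
  simp only [Set.mem_Icc, piVal] at *; split_ifs <;> omega

theorem piValInv_mem_Icc (hk : k ∈ Set.Icc 1 n) : piValInv n k ∈ Set.Icc 1 n := by
  simp only [Set.mem_Icc, piValInv] at *; split_ifs <;> omega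

theorem piVal_injOn : Set.InjOn (piVal n) (Set.Icc 1 n) := by
  intro a ha b hb h
  simp only [Set.mem_Icc, piVal] at *; split_ifs at h <;> omega

theorem piValInv_injOn : Set.InjOn (piValInv n) (Set.Icc 1 n) := by
  intro a ha b hb h
  simp only [Set.mem_Icc, piValInv] at *; split_ifs at h <;> omega

theorem piVal_piValInv (hk : k ∈ Set.Icc 1 n) : piVal n (piValInv n k) = k := by
  simp only [Set.mem_Icc, piVal, piValInv] at *; split_ifs <;> omega

theorem piValInv_piVal (hk : k ∈ Set.Icc 1 n) : piValInv n (piVal n k) = k := by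
  simp only [Set.mem_Icc, piVal, piValInv] at *; split_ifs <;> omega

end Values

section Boxes

variable {n : ℕ} {μ : ℕ → ℕ} {u v : ℕ × ℕ}

theorem augIn_of_dgIn (hu : dgIn n μ u) : augIn n μ u :=
  ⟨hu.1, hu.2.1, hu.2.2.2⟩

theorem augOf_of_dgIn (σ : ℕ × ℕ → ℕ) (hu : dgIn n μ u) : augOf σ u = σ u :=
  if_neg (by have := hu.2.2.1; omega)

theorem augOf_mem_Icc {σ : ℕ × ℕ → ℕ} (hσ : IsFilling n μ σ) (hu : augIn n μ u) :
    augOf σ u ∈ Set.Icc 1 n := by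
  unfold augOf
  split_ifs with h
  · exact ⟨hu.1, hu.2.1⟩
  · exact hσ u ⟨hu.1, hu.2.1, by omega, hu.2.2⟩

theorem piComp_one : piComp n μ 1 = μ n + 1 := if_pos rfl

theorem one_le_piComp_one : 1 ≤ piComp n μ 1 := piComp_one ▸ Nat.le_add_left 1 _

theorem piComp_succ {a : ℕ} (ha : 1 ≤ a) : piComp n μ (a + 1) = μ a := by
  simp [piComp, show a ≠ 0 by omega]

theorem augIn_piBox (hu : augIn n μ u) : augIn n (piComp n μ) (piBox n u) := by
  obtain ⟨a, b⟩ := u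
  obtain ⟨h1, h2, h3 : b ≤ μ a⟩ := hu
  by_cases h : a < n
  · simp only [piBox, if_pos h, augIn, piComp_succ h1]; omega
  · obtain rfl : a = n := by omega
    simp only [piBox, if_neg h, augIn, piComp_one]; omega

theorem dgIn_piBox (hu : dgIn n μ u) : dgIn n (piComp n μ) (piBox n u) := by
  obtain ⟨a, b⟩ := u
  obtain ⟨h1, h2, h3, h4 : b ≤ μ a⟩ := hu
  by_cases h : a < n
  · simp only [piBox, if_pos h, dgIn, piComp_succ h1]; omega
  · obtain rfl : a = n := by omega
    simp only [piBox, if_neg h, dgIn, piComp_one]; omega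

theorem augIn_piBoxInv (hv : augIn n (piComp n μ) v) : augIn n μ (piBoxInv n v) := by
  obtain ⟨h1, h2, h3⟩ := hv
  unfold piBoxInv augIn piComp at *
  split_ifs at * <;> grind

theorem piBoxInv_piBox (hu : augIn n μ u) : piBoxInv n (piBox n u) = u := by
  obtain ⟨h1, h2, -⟩ := hu
  unfold piBox piBoxInv
  split_ifs <;> grind

theorem piBox_piBoxInv (hv : dgIn n (piComp n μ) v) : piBox n (piBoxInv n v) = v := by
  obtain ⟨h1, h2, h3, -⟩ := hv
  unfold piBox piBoxInv
  split_ifs <;> grind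

theorem attacks_piBox (hu : augIn n μ u) (hv : augIn n μ v) (h : attacks u v) :
    attacks (piBox n u) (piBox n v) := by
  obtain ⟨hu1, hu2, -⟩ := hu
  obtain ⟨hv1, hv2, -⟩ := hv
  unfold attacks piBox at *
  split_ifs <;> grind

theorem attacks_piBoxInv (hu : augIn n (piComp n μ) u) (hv : augIn n (piComp n μ) v)
    (h : attacks u v) : attacks (piBoxInv n u) (piBoxInv n v) := by
  obtain ⟨hu1, hu2, -⟩ := hu
  obtain ⟨hv1, hv2, -⟩ := hv
  unfold attacks piBoxInv at *
  split_ifs <;> grind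

end Boxes

theorem NonAttacking.of_comp {n : ℕ} {μ ν : ℕ → ℕ} {σh τh : ℕ × ℕ → ℕ}
    {e : ℕ × ℕ → ℕ × ℕ} {g : ℕ → ℕ} {S : Set ℕ} (hσ : NonAttacking n μ σh)
    (hσS : ∀ u, augIn n μ u → σh u ∈ S) (hg : Set.InjOn g S)
    (he : ∀ u, augIn n ν u → augIn n μ (e u))
    (he_attacks : ∀ u v, augIn n ν u → augIn n ν v → attacks u v → attacks (e u) (e v))
    (hτ : ∀ u, augIn n ν u → τh u = g (σh (e u))) : NonAttacking n ν τh := by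
  intro u v hu hv huv heq
  rw [hτ u hu, hτ v hv] at heq
  exact hσ _ _ (he u hu) (he v hv) (he_attacks u v hu hv huv)
    (hg (hσS _ (he u hu)) (hσS _ (he v hv)) heq)

/-- The attacking pair `(1,1)`, `(τ(1,1),0)` forbids any other value. -/
theorem apply_one_one_of_mem_NAFillings {n : ℕ} {ν : ℕ → ℕ} {τ : ℕ × ℕ → ℕ}
    (hn : 1 ≤ n) (hν : 1 ≤ ν 1) (hτ : τ ∈ NAFillings n ν) : τ (1, 1) = 1 := by
  obtain ⟨hfill, -, hna⟩ := hτ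
  have h11 : dgIn n ν (1, 1) := ⟨le_rfl, hn, le_rfl, hν⟩
  obtain ⟨h1, hle⟩ := hfill _ h11
  by_contra hne
  have hatt : attacks (1, 1) (τ (1, 1), 0) := by
    refine ⟨by simp, Or.inr (Or.inl ⟨rfl, by omega⟩)⟩
  exact hna _ _ (augIn_of_dgIn h11) ⟨by omega, hle, Nat.zero_le _⟩ hatt
    (by simp [augOf])

section PiFill

variable {n : ℕ} {μ : ℕ → ℕ}

/-- On row `0` this is `π(i-1) = i`, and `π(n) = 1` at the box `(1,0)`, whose
preimage `(n, 0 - 1)` is `(n,0)` by truncated subtraction. -/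
theorem augOf_piFillC (σ : ℕ × ℕ → ℕ) {v : ℕ × ℕ} (hv : augIn n (piComp n μ) v) :
    augOf (piFillC n μ σ) v = piVal n (augOf σ (piBoxInv n v)) := by
  obtain ⟨a, b⟩ := v
  obtain ⟨h1, h2, h3⟩ := hv
  rcases Nat.eq_zero_or_pos b with rfl | hb
  · unfold augOf piBoxInv piVal
    split_ifs <;> grind
  · have hdg : dgIn n (piComp n μ) (a, b) := ⟨h1, h2, hb, h3⟩
    simp [augOf, hb.ne', piFillC, hdg]

/-- The row-`0` box `(n,0)` is sent to `(1,1)`, so this needs `τ(1,1) = 1`. -/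
theorem augOf_piFillInv {τ : ℕ × ℕ → ℕ} (hτ : τ (1, 1) = 1) {u : ℕ × ℕ}
    (hu : augIn n μ u) : augOf (piFillInv n μ τ) u = piValInv n (augOf τ (piBox n u)) := by
  obtain ⟨a, b⟩ := u
  obtain ⟨h1, h2, h3⟩ := hu
  rcases Nat.eq_zero_or_pos b with rfl | hb
  · unfold augOf piBox piValInv
    split_ifs <;> grind
  · have hdg : dgIn n μ (a, b) := ⟨h1, h2, hb, h3⟩
    rw [augOf_of_dgIn _ hdg, augOf_of_dgIn _ (dgIn_piBox hdg)]
    simp [piFillInv, hdg]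

theorem mapsTo_piFillC :
    Set.MapsTo (piFillC n μ) (NAFillings n μ) (NAFillings n (piComp n μ)) := by
  rintro σ ⟨hfill, -, hna⟩
  refine ⟨fun v hv => ?_, fun v hv => if_neg hv, ?_⟩
  · rw [← augOf_of_dgIn (piFillC n μ σ) hv, augOf_piFillC σ (augIn_of_dgIn hv)]
    exact piVal_mem_Icc (augOf_mem_Icc hfill (augIn_piBoxInv (augIn_of_dgIn hv)))
  · exact hna.of_comp (fun u hu => augOf_mem_Icc hfill hu) piVal_injOn
      (fun _ => augIn_piBoxInv) (fun _ _ => attacks_piBoxInv) (fun _ => augOf_piFillC σ)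

theorem mapsTo_piFillInv (hn : 1 ≤ n) :
    Set.MapsTo (piFillInv n μ) (NAFillings n (piComp n μ)) (NAFillings n μ) := by
  intro τ hτ
  have h11 := apply_one_one_of_mem_NAFillings hn one_le_piComp_one hτ
  obtain ⟨hfill, -, hna⟩ := hτ
  refine ⟨fun u hu => ?_, fun u hu => if_neg hu, ?_⟩
  · rw [← augOf_of_dgIn (piFillInv n μ τ) hu, augOf_piFillInv h11 (augIn_of_dgIn hu)]
    exact piValInv_mem_Icc (augOf_mem_Icc hfill (augIn_piBox (augIn_of_dgIn hu)))
  · exact hna.of_comp (fun u hu => augOf_mem_Icc hfill hu) piValInv_injOn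
      (fun _ => augIn_piBox) (fun _ _ => attacks_piBox) (fun _ => augOf_piFillInv h11)

theorem leftInvOn_piFillInv_piFillC :
    Set.LeftInvOn (piFillInv n μ) (piFillC n μ) (NAFillings n μ) := by
  rintro σ ⟨hfill, hzero, -⟩
  funext u
  by_cases hu : dgIn n μ u
  · have hbox := dgIn_piBox hu
    simp only [piFillInv, piFillC, if_pos hu, if_pos hbox,
      piBoxInv_piBox (augIn_of_dgIn hu), augOf_of_dgIn σ hu]
    exact piValInv_piVal (hfill u hu)
  · simp only [piFillInv, if_neg hu, hzero u hu]

theorem rightInvOn_piFillInv_piFillC (hn : 1 ≤ n) :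
    Set.RightInvOn (piFillInv n μ) (piFillC n μ) (NAFillings n (piComp n μ)) := by
  intro τ hτ
  have h11 := apply_one_one_of_mem_NAFillings hn one_le_piComp_one hτ
  obtain ⟨hfill, hzero, -⟩ := hτ
  funext v
  by_cases hv : dgIn n (piComp n μ) v
  · simp only [piFillC, if_pos hv]
    rw [augOf_piFillInv h11 (augIn_piBoxInv (augIn_of_dgIn hv)), piBox_piBoxInv hv,
      augOf_of_dgIn τ hv]
    exact piVal_piValInv (hfill v hv)
  · simp only [piFillC, if_neg hv, hzero v hv]

end PiFill

/-- in any non-attacking filling of `π(μ)` the box `(1,1)` carries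
the value `1`; consequently `σ ↦ ^πσ` is a bijection from non-attacking fillings
of `μ` onto those of `π(μ)`. -/
theorem pi_fill_bijection (n : ℕ) (μ : ℕ → ℕ) (hn : 1 ≤ n) :
    (∀ τ ∈ NAFillings n (piComp n μ), τ (1, 1) = 1) ∧
    Set.BijOn (piFillC n μ) (NAFillings n μ) (NAFillings n (piComp n μ)) :=
  ⟨fun _ => apply_one_one_of_mem_NAFillings hn one_le_piComp_one,
    Set.InvOn.bijOn ⟨leftInvOn_piFillInv_piFillC, rightInvOn_piFillInv_piFillC hn⟩
      mapsTo_piFillC (mapsTo_piFillInv hn)⟩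
end
end

section
/- For a nonzero Laurent polynomial ring over a field K and the Demazure–Lusztig type operator T_i defined by T_i f = t·s_i(f) + (t−1)(f − s_i(f))/(1 − x_i/x_{i+1}), the following are equivalent for G_1, G_2 ∈ K[x_1^{±1},…,x_n^{±1}]: (i) G_2 = T_i G_1; (ii) both G_1 + G_2 and t·x_{i+1}·G_1 + x_i·G_2 are symmetric in x_i and x_{i+1}. -/
noncomputable section

/-- The variable `x_k` in the Laurent polynomial ring `K[x_1^{±1},…,x_n^{±1}]`,
realized as the group algebra of `Fin n →₀ ℤ`. -/
def Xvar (K : Type) [Field K] (n : ℕ) (k : Fin n) : AddMonoidAlgebra K (Fin n →₀ ℤ) :=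
  AddMonoidAlgebra.single (Finsupp.single k (1 : ℤ)) (1 : K)

/-- The inverse variable `x_k^{-1}`. -/
def XvarInv (K : Type) [Field K] (n : ℕ) (k : Fin n) : AddMonoidAlgebra K (Fin n →₀ ℤ) :=
  AddMonoidAlgebra.single (Finsupp.single k (-1 : ℤ)) (1 : K)

/-- The automorphism `s` exchanging the variables `x_i` and `x_j`. -/
def swapAut (K : Type) [Field K] (n : ℕ) (i j : Fin n) :
    AddMonoidAlgebra K (Fin n →₀ ℤ) ≃ₐ[K] AddMonoidAlgebra K (Fin n →₀ ℤ) :=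
  AddMonoidAlgebra.domCongr K K (Finsupp.domCongr (Equiv.swap i j))

/-- `swapAut` is an involution. -/
lemma swapAut_swapAut (K : Type) [Field K] (n : ℕ) (i j : Fin n)
    (f : AddMonoidAlgebra K (Fin n →₀ ℤ)) :
    swapAut K n i j (swapAut K n i j f) = f := by
  have h : (swapAut K n i j).symm = swapAut K n i j := by
    rw [swapAut, AddMonoidAlgebra.domCongr_symm, Finsupp.domCongr_symm, Equiv.symm_swap]
  conv_lhs => rw [← h]
  exact (swapAut K n i j).symm_apply_apply f

lemma swapAut_Xvar (K : Type) [Field K] (n : ℕ) (i j k : Fin n) :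
    swapAut K n i j (Xvar K n k) = Xvar K n (Equiv.swap i j k) := by
  rw [swapAut, Xvar, AddMonoidAlgebra.domCongr_single]
  simp [Xvar]

lemma swapAut_XvarInv (K : Type) [Field K] (n : ℕ) (i j k : Fin n) :
    swapAut K n i j (XvarInv K n k) = XvarInv K n (Equiv.swap i j k) := by
  rw [swapAut, XvarInv, AddMonoidAlgebra.domCongr_single, Finsupp.domCongr_apply,
    Finsupp.equivMapDomain_single, XvarInv]

lemma Xvar_mul_XvarInv (K : Type) [Field K] (n : ℕ) (k : Fin n) :
    Xvar K n k * XvarInv K n k = 1 := by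
  rw [Xvar, XvarInv, AddMonoidAlgebra.single_mul_single]
  simp [AddMonoidAlgebra.one_def]

lemma Xvar_sub_ne (K : Type) [Field K] (n : ℕ) (i j : Fin n) (hij : i ≠ j) :
    Xvar K n j - Xvar K n i ≠ 0 := by
  intro h
  rw [sub_eq_zero, Xvar, Xvar] at h
  rcases (Finsupp.single_eq_single_iff _ _ _ _).mp (congrArg AddMonoidAlgebra.coeff h) with ⟨hμ, -⟩ | ⟨h1, -⟩
  · rcases (Finsupp.single_eq_single_iff _ _ _ _).mp hμ with ⟨hk, -⟩ | ⟨h1, -⟩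
    · exact hij hk.symm
    · exact one_ne_zero h1
  · exact one_ne_zero h1

/-- `G₂ = T_i G₁` (the Demazure–Lusztig type relation
`(1 - x_i/x_{i+1})·G₂ = (1 - x_i/x_{i+1})·t·s_i(G₁) + (t-1)(G₁ - s_i G₁)`,
i.e. `G₂ = t·s_i(G₁) + (t-1)(G₁ - s_i G₁)/(1 - x_i/x_{i+1})`)
holds iff both `G₁ + G₂` and `t·x_{i+1}·G₁ + x_i·G₂` are symmetric in
`x_i, x_{i+1}`. -/
theorem Ti_iff_symmetric (K : Type) [Field K] (t : K) (n : ℕ) (i j : Fin n)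
    (hij : (i : ℕ) + 1 = (j : ℕ))
    (G1 G2 : AddMonoidAlgebra K (Fin n →₀ ℤ)) :
    ((1 - Xvar K n i * XvarInv K n j) * G2 =
        (1 - Xvar K n i * XvarInv K n j) *
            (algebraMap K (AddMonoidAlgebra K (Fin n →₀ ℤ)) t * swapAut K n i j G1) +
          algebraMap K (AddMonoidAlgebra K (Fin n →₀ ℤ)) (t - 1) *
            (G1 - swapAut K n i j G1)) ↔
      (swapAut K n i j (G1 + G2) = G1 + G2 ∧
       swapAut K n i j
           (algebraMap K (AddMonoidAlgebra K (Fin n →₀ ℤ)) t * Xvar K n j * G1 +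
             Xvar K n i * G2) =
         algebraMap K (AddMonoidAlgebra K (Fin n →₀ ℤ)) t * Xvar K n j * G1 +
           Xvar K n i * G2) := by
  have hne : i ≠ j := fun h => by subst h; omega
  set xi := Xvar K n i with hxidef
  set xj := Xvar K n j with hxjdef
  set yi := XvarInv K n i with hyidef
  set yj := XvarInv K n j with hyjdef
  set ct := algebraMap K (AddMonoidAlgebra K (Fin n →₀ ℤ)) t with hctdef
  set sG1 := swapAut K n i j G1 with hsG1def
  set sG2 := swapAut K n i j G2 with hsG2def
  have hsxi : swapAut K n i j xi = xj := by
    rw [hxidef, swapAut_Xvar, Equiv.swap_apply_left]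
  have hsxj : swapAut K n i j xj = xi := by
    rw [hxjdef, swapAut_Xvar, Equiv.swap_apply_right]
  have hsyi : swapAut K n i j yi = yj := by
    rw [hyidef, swapAut_XvarInv, Equiv.swap_apply_left]
  have hsyj : swapAut K n i j yj = yi := by
    rw [hyjdef, swapAut_XvarInv, Equiv.swap_apply_right]
  have hsct : swapAut K n i j ct = ct := AlgEquiv.commutes _ t
  have hssG1 : swapAut K n i j sG1 = G1 := swapAut_swapAut K n i j G1
  have hssG2 : swapAut K n i j sG2 = G2 := swapAut_swapAut K n i j G2
  have hxi : xi * yi = 1 := Xvar_mul_XvarInv K n i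
  have hxj : xj * yj = 1 := Xvar_mul_XvarInv K n j
  have ha : xj - xi ≠ 0 := Xvar_sub_ne K n i j hne
  have hc : algebraMap K (AddMonoidAlgebra K (Fin n →₀ ℤ)) (t - 1) = ct - 1 := by
    rw [map_sub, map_one]
  rw [hc]
  constructor
  · intro h
    have hs := congrArg (swapAut K n i j) h
    simp only [map_mul, map_add, map_sub, map_one, hsct, hsxi, hsxj, hsyi, hsyj,
      hssG1, hssG2] at hs
    -- hs : (1 - xj * yi) * sG2 = (1 - xj * yi) * (ct * G1) + (ct - 1) * (sG1 - G1)
    have h1' : (xj - xi) * G2 = (xj - xi) * (ct * sG1) + (ct - 1) * xj * (G1 - sG1) := by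
      linear_combination xj * h + xi * (G2 - ct * sG1) * hxj
    have h2' : (xi - xj) * sG2 = (xi - xj) * (ct * G1) + (ct - 1) * xi * (sG1 - G1) := by
      linear_combination xi * hs + xj * (sG2 - ct * G1) * hxi
    constructor
    · have goal2 : (xj - xi) * ((xj - xi) * (sG1 + sG2)) =
          (xj - xi) * ((xj - xi) * (G1 + G2)) := by
        linear_combination (-(xj - xi)) * h1' - (xj - xi) * h2'
      simp only [map_add, ← hsG1def, ← hsG2def]
      exact mul_left_cancel₀ ha (mul_left_cancel₀ ha goal2)
    · have goal2 : (xj - xi) * ((xj - xi) * (ct * xi * sG1 + xj * sG2)) =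
          (xj - xi) * ((xj - xi) * (ct * xj * G1 + xi * G2)) := by
        linear_combination (-(xj - xi) * xi) * h1' + (-(xj - xi) * xj) * h2'
      simp only [map_add, map_mul, hsct, hsxi, hsxj, ← hsG1def, ← hsG2def]
      have := mul_left_cancel₀ ha (mul_left_cancel₀ ha goal2)
      linear_combination this
  · rintro ⟨h1, h2⟩
    simp only [map_add, map_mul, hsct, hsxi, hsxj, ← hsG1def, ← hsG2def] at h1 h2
    -- h1 : sG1 + sG2 = G1 + G2 ; h2 : ct * xi * sG1 + xj * sG2 = ct * xj * G1 + xi * G2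
    linear_combination (-yj * xj) * h1 + yj * h2 + (sG1 + (ct - 1) * G1 - G2) * hxj
end
end

section
/- Let C = Σ_{u ∈ dg'(μ)} a(u) − |{(i,j) : i < j, μ_i > μ_j}|. Then C is invariant under adjacent transpositions of the parts of μ, and equals n(λ) = Σ_i (i−1)λ_i, where λ is the partition rearrangement of μ. -/
open Finset

noncomputable section
attribute [local instance] Classical.propDecidable

/-- The composition obtained from `μ` by exchanging parts `k` and `k+1`. -/
def swapComp (k : ℕ) (μ : ℕ → ℕ) : ℕ → ℕ := fun m => μ (Equiv.swap k (k + 1) m)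

/-- `s_k` on boxes, permuting the column index. -/
def swapBox (k : ℕ) (u : ℕ × ℕ) : ℕ × ℕ := (Equiv.swap k (k + 1) u.1, u.2)

/-- The quantity `C(μ) = Σ_{u ∈ dg(μ)} a(u) - |{i<j : μ_i > μ_j}|`. -/
def CZ (n : ℕ) (μ : ℕ → ℕ) : ℤ :=
  (∑ u ∈ dgF n μ, (armLen n μ u : ℤ)) -
    (((Finset.Icc 1 n) ×ˢ (Finset.Icc 1 n)).filter
        (fun p => p.1 < p.2 ∧ μ p.2 < μ p.1)).card

section CZaux

private lemma sum_diagF {M : Type*} [AddCommMonoid M] (n a : ℕ) (g : ℕ → ℕ) (f : ℕ × ℕ → M) :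
    ∑ u ∈ (Finset.Icc 1 n).biUnion (fun i => (Finset.Icc a (g i)).image (fun j => (i, j))), f u
      = ∑ i ∈ Finset.Icc 1 n, ∑ j ∈ Finset.Icc a (g i), f (i, j) := by
  rw [Finset.sum_biUnion]
  · exact Finset.sum_congr rfl fun i _ =>
      Finset.sum_image (fun x _ y _ h => by simpa using h)
  · intro x _ y _ hxy
    simp only [Finset.disjoint_left]
    intro u hu hv
    simp only [Finset.mem_image, Finset.mem_Icc] at hu hv
    obtain ⟨j, _, rfl⟩ := hu
    obtain ⟨j', _, h⟩ := hv
    exact hxy (by simpa using (congrArg Prod.fst h).symm)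

private lemma sum_ind_le (t m : ℕ) :
    (∑ j ∈ Finset.Icc 1 m, if j ≤ t then (1 : ℕ) else 0) = min t m := by
  rw [← Finset.card_filter]
  have h : (Finset.Icc 1 m).filter (fun j => j ≤ t) = Finset.Icc 1 (min t m) := by
    ext j; simp only [Finset.mem_filter, Finset.mem_Icc]; omega
  rw [h, Nat.card_Icc]; omega

private lemma sum_ind_and (P : Prop) (t m : ℕ) :
    (∑ j ∈ Finset.Icc 1 m, if P ∧ j ≤ t then (1 : ℕ) else 0)
      = if P then min t m else 0 := by
  by_cases hP : P
  · simp only [hP, true_and, if_true]; exact sum_ind_le t m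
  · simp [hP]

private lemma inner_arm (n : ℕ) (μ : ℕ → ℕ) (i j i' : ℕ) (hj : 1 ≤ j)
    (h1 : 1 ≤ i') (h2 : i' ≤ n) :
    (∑ j' ∈ Finset.Icc 0 (μ i'), if armIn n μ (i, j) (i', j') then (1 : ℕ) else 0)
      = (if i' < i ∧ μ i' ≤ μ i ∧ j ≤ μ i' then 1 else 0)
        + (if i < i' ∧ μ i' < μ i ∧ j + 1 ≤ μ i' + 2 ∧ j ≤ μ i' + 1 then 1 else 0) := by
  have hstep : ∀ j' ∈ Finset.Icc 0 (μ i'),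
      (if armIn n μ (i, j) (i', j') then (1 : ℕ) else 0)
        = (if j' = j then (if i' < i ∧ μ i' ≤ μ i ∧ j ≤ μ i' then 1 else 0) else 0)
          + (if j' = j - 1 then
              (if i < i' ∧ μ i' < μ i ∧ j + 1 ≤ μ i' + 2 ∧ j ≤ μ i' + 1 then 1 else 0) else 0) := by
    intro j' hj'
    simp only [Finset.mem_Icc] at hj'
    split_ifs <;> simp only [armIn, dgIn, augIn] at * <;> omega
  rw [Finset.sum_congr rfl hstep, Finset.sum_add_distrib,
    Finset.sum_ite_eq' _ j, Finset.sum_ite_eq' _ (j - 1)]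
  simp only [Finset.mem_Icc]
  split_ifs <;> omega

private lemma armLen_eq (n : ℕ) (μ : ℕ → ℕ) (i j : ℕ) (hj : 1 ≤ j) :
    armLen n μ (i, j) = ∑ i' ∈ Finset.Icc 1 n,
      ((if i' < i ∧ μ i' ≤ μ i ∧ j ≤ μ i' then 1 else 0)
        + (if i < i' ∧ μ i' < μ i ∧ j + 1 ≤ μ i' + 2 ∧ j ≤ μ i' + 1 then 1 else 0)) := by
  rw [armLen, armF, Finset.card_filter, augF, sum_diagF]
  refine Finset.sum_congr rfl fun i' hi' => ?_
  simp only [Finset.mem_Icc] at hi'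
  exact inner_arm n μ i j i' hj hi'.1 hi'.2

private lemma sumArm (n : ℕ) (μ : ℕ → ℕ) :
    (∑ u ∈ dgF n μ, armLen n μ u)
      = ∑ i ∈ Finset.Icc 1 n, ∑ i' ∈ Finset.Icc 1 n,
          ((if i' < i ∧ μ i' ≤ μ i then μ i' else 0)
            + (if i < i' ∧ μ i' < μ i then μ i' + 1 else 0)) := by
  rw [dgF, sum_diagF]
  refine Finset.sum_congr rfl fun i _ => ?_
  rw [Finset.sum_congr rfl (fun j hj => armLen_eq n μ i j (Finset.mem_Icc.mp hj).1),
    Finset.sum_comm]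
  refine Finset.sum_congr rfl fun i' _ => ?_
  rw [Finset.sum_add_distrib]
  have e1 : (∑ j ∈ Finset.Icc 1 (μ i),
      if i' < i ∧ μ i' ≤ μ i ∧ j ≤ μ i' then (1 : ℕ) else 0)
      = if i' < i ∧ μ i' ≤ μ i then μ i' else 0 := by
    by_cases h : i' < i ∧ μ i' ≤ μ i
    · rw [if_pos h]
      calc (∑ j ∈ Finset.Icc 1 (μ i),
          if i' < i ∧ μ i' ≤ μ i ∧ j ≤ μ i' then (1 : ℕ) else 0)
          = ∑ j ∈ Finset.Icc 1 (μ i), (if j ≤ μ i' then 1 else 0) :=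
            Finset.sum_congr rfl fun j _ => by
              by_cases hj : j ≤ μ i' <;> simp [hj, h.1, h.2]
        _ = min (μ i') (μ i) := sum_ind_le _ _
        _ = μ i' := min_eq_left h.2
    · rw [if_neg h]
      exact Finset.sum_eq_zero fun j _ => if_neg (by tauto)
  have e2 : (∑ j ∈ Finset.Icc 1 (μ i),
      if i < i' ∧ μ i' < μ i ∧ j + 1 ≤ μ i' + 2 ∧ j ≤ μ i' + 1 then (1 : ℕ) else 0)
      = if i < i' ∧ μ i' < μ i then μ i' + 1 else 0 := by
    by_cases h : i < i' ∧ μ i' < μ i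
    · rw [if_pos h]
      calc (∑ j ∈ Finset.Icc 1 (μ i),
          if i < i' ∧ μ i' < μ i ∧ j + 1 ≤ μ i' + 2 ∧ j ≤ μ i' + 1 then (1 : ℕ) else 0)
          = ∑ j ∈ Finset.Icc 1 (μ i), (if j ≤ μ i' + 1 then 1 else 0) :=
            Finset.sum_congr rfl fun j _ => by
              by_cases hj : j ≤ μ i' + 1 <;> [skip; skip] <;> split_ifs <;> omega
        _ = min (μ i' + 1) (μ i) := sum_ind_le _ _
        _ = μ i' + 1 := min_eq_left (by omega)
    · rw [if_neg h]
      exact Finset.sum_eq_zero fun j _ => if_neg (by tauto)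
  rw [e1, e2]

private lemma invCount (n : ℕ) (μ : ℕ → ℕ) :
    ((((Finset.Icc 1 n) ×ˢ (Finset.Icc 1 n)).filter
        (fun p => p.1 < p.2 ∧ μ p.2 < μ p.1)).card)
      = ∑ i ∈ Finset.Icc 1 n, ∑ i' ∈ Finset.Icc 1 n,
          (if i < i' ∧ μ i' < μ i then 1 else 0) := by
  rw [Finset.card_filter, Finset.sum_product]

private lemma CZ_min (n : ℕ) (μ : ℕ → ℕ) :
    CZ n μ = ∑ i ∈ Finset.Icc 1 n, ∑ i' ∈ Finset.Icc 1 n,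
      (if i < i' then min ((μ i : ℤ)) ((μ i' : ℤ)) else 0) := by
  have harm : (∑ u ∈ dgF n μ, (armLen n μ u : ℤ))
      = ∑ i ∈ Finset.Icc 1 n, ∑ i' ∈ Finset.Icc 1 n,
          ((if i' < i ∧ μ i' ≤ μ i then (μ i' : ℤ) else 0)
            + (if i < i' ∧ μ i' < μ i then (μ i' : ℤ) + 1 else 0)) := by
    rw [← Nat.cast_sum, sumArm]
    push_cast [apply_ite (fun x : ℕ => (x : ℤ))]
    rfl
  have hinv : (((((Finset.Icc 1 n) ×ˢ (Finset.Icc 1 n)).filter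
        (fun p => p.1 < p.2 ∧ μ p.2 < μ p.1)).card : ℤ))
      = ∑ i ∈ Finset.Icc 1 n, ∑ i' ∈ Finset.Icc 1 n,
          (if i < i' ∧ μ i' < μ i then (1 : ℤ) else 0) := by
    rw [invCount]
    push_cast [apply_ite (fun x : ℕ => (x : ℤ))]
    rfl
  rw [CZ, harm, hinv, ← Finset.sum_sub_distrib]
  have hsplit : ∀ i ∈ Finset.Icc 1 n,
      ((∑ i' ∈ Finset.Icc 1 n,
          ((if i' < i ∧ μ i' ≤ μ i then (μ i' : ℤ) else 0)
            + (if i < i' ∧ μ i' < μ i then (μ i' : ℤ) + 1 else 0)))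
        - ∑ i' ∈ Finset.Icc 1 n, (if i < i' ∧ μ i' < μ i then (1 : ℤ) else 0))
      = (∑ i' ∈ Finset.Icc 1 n, (if i' < i ∧ μ i' ≤ μ i then (μ i' : ℤ) else 0))
        + ∑ i' ∈ Finset.Icc 1 n, (if i < i' ∧ μ i' < μ i then (μ i' : ℤ) else 0) := by
    intro i _
    rw [← Finset.sum_sub_distrib, ← Finset.sum_add_distrib]
    refine Finset.sum_congr rfl fun i' _ => ?_
    split_ifs <;> ring
  rw [Finset.sum_congr rfl hsplit, Finset.sum_add_distrib, Finset.sum_comm (s := Finset.Icc 1 n)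
    (f := fun i i' => if i' < i ∧ μ i' ≤ μ i then (μ i' : ℤ) else 0),
    ← Finset.sum_add_distrib]
  refine Finset.sum_congr rfl fun i _ => ?_
  rw [← Finset.sum_add_distrib]
  refine Finset.sum_congr rfl fun i' _ => ?_
  by_cases h : i < i'
  · by_cases hm : μ i ≤ μ i'
    · rw [if_pos ⟨h, hm⟩, if_neg (by omega), if_pos h,
        min_eq_left (by exact_mod_cast hm)]
      ring
    · rw [if_neg (by tauto), if_pos ⟨h, by omega⟩, if_pos h,
        min_eq_right (by exact_mod_cast Nat.le_of_not_le hm)]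
      ring
  · rw [if_neg (by tauto), if_neg (by tauto), if_neg h]
    ring

private lemma two_CZ (n : ℕ) (μ : ℕ → ℕ) :
    2 * CZ n μ
      = (∑ i ∈ Finset.Icc 1 n, ∑ i' ∈ Finset.Icc 1 n, min ((μ i : ℤ)) ((μ i' : ℤ)))
        - ∑ i ∈ Finset.Icc 1 n, (μ i : ℤ) := by
  rw [CZ_min, two_mul]
  nth_rewrite 2 [Finset.sum_comm]
  rw [← Finset.sum_add_distrib]
  have hdiag : (∑ i ∈ Finset.Icc 1 n, (μ i : ℤ))
      = ∑ i ∈ Finset.Icc 1 n, ∑ i' ∈ Finset.Icc 1 n,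
          (if i' = i then (μ i : ℤ) else 0) := by
    refine Finset.sum_congr rfl fun i hi => ?_
    rw [Finset.sum_ite_eq' _ i, if_pos hi]
  rw [hdiag, ← Finset.sum_sub_distrib]
  refine Finset.sum_congr rfl fun i _ => ?_
  rw [← Finset.sum_add_distrib, ← Finset.sum_sub_distrib]
  refine Finset.sum_congr rfl fun i' _ => ?_
  rw [min_comm ((μ i' : ℤ)) ((μ i : ℤ))]
  by_cases h1 : i < i'
  · have h2 : ¬ i' < i := by omega
    have h3 : ¬ i' = i := by omega
    simp [h1, h2, h3]
  · by_cases h2 : i' < i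
    · have h3 : ¬ i' = i := by omega
      simp [h1, h2, h3]
    · have h3 : i' = i := by omega
      subst h3
      simp [h1, h2]

private lemma sum_comp_eq (n : ℕ) (lam μ : ℕ → ℕ)
    (h : Multiset.map lam (Finset.Icc 1 n).val = Multiset.map μ (Finset.Icc 1 n).val)
    (g : ℕ → ℤ) :
    (∑ i ∈ Finset.Icc 1 n, g (lam i)) = ∑ i ∈ Finset.Icc 1 n, g (μ i) := by
  have key : ∀ ν : ℕ → ℕ, (∑ i ∈ Finset.Icc 1 n, g (ν i))
      = ((Multiset.map ν (Finset.Icc 1 n).val).map g).sum := by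
    intro ν
    rw [Multiset.map_map]
    rfl
  rw [key, key, h]

private lemma CZ_congr (n : ℕ) (lam μ : ℕ → ℕ)
    (h : Multiset.map lam (Finset.Icc 1 n).val = Multiset.map μ (Finset.Icc 1 n).val) :
    CZ n lam = CZ n μ := by
  have h1 : (∑ i ∈ Finset.Icc 1 n, ((lam i : ℤ)))
      = ∑ i ∈ Finset.Icc 1 n, ((μ i : ℤ)) :=
    sum_comp_eq n lam μ h (fun t => (t : ℤ))
  have h2 : (∑ i ∈ Finset.Icc 1 n, ∑ i' ∈ Finset.Icc 1 n, min ((lam i : ℤ)) ((lam i' : ℤ)))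
      = ∑ i ∈ Finset.Icc 1 n, ∑ i' ∈ Finset.Icc 1 n, min ((μ i : ℤ)) ((μ i' : ℤ)) := by
    calc (∑ i ∈ Finset.Icc 1 n, ∑ i' ∈ Finset.Icc 1 n, min ((lam i : ℤ)) ((lam i' : ℤ)))
        = ∑ i ∈ Finset.Icc 1 n, ∑ i' ∈ Finset.Icc 1 n, min ((lam i : ℤ)) ((μ i' : ℤ)) :=
          Finset.sum_congr rfl fun i _ =>
            sum_comp_eq n lam μ h (fun t => min ((lam i : ℤ)) ((t : ℤ)))
      _ = ∑ i' ∈ Finset.Icc 1 n, ∑ i ∈ Finset.Icc 1 n, min ((lam i : ℤ)) ((μ i' : ℤ)) :=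
          Finset.sum_comm
      _ = ∑ i' ∈ Finset.Icc 1 n, ∑ i ∈ Finset.Icc 1 n, min ((μ i : ℤ)) ((μ i' : ℤ)) :=
          Finset.sum_congr rfl fun i' _ =>
            sum_comp_eq n lam μ h (fun t => min ((t : ℤ)) ((μ i' : ℤ)))
      _ = ∑ i ∈ Finset.Icc 1 n, ∑ i' ∈ Finset.Icc 1 n, min ((μ i : ℤ)) ((μ i' : ℤ)) :=
          Finset.sum_comm
  have t1 := two_CZ n lam
  have t2 := two_CZ n μ
  rw [h1, h2] at t1
  omega

private lemma CZ_decreasing (n : ℕ) (lam : ℕ → ℕ)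
    (hdec : ∀ i j : ℕ, 1 ≤ i → i ≤ j → j ≤ n → lam j ≤ lam i) :
    CZ n lam = ∑ i ∈ Finset.Icc 1 n, ((i : ℤ) - 1) * (lam i : ℤ) := by
  rw [CZ_min, Finset.sum_comm]
  refine Finset.sum_congr rfl fun i' hi' => ?_
  simp only [Finset.mem_Icc] at hi'
  have step : ∀ i ∈ Finset.Icc 1 n,
      (if i < i' then min ((lam i : ℤ)) ((lam i' : ℤ)) else 0)
        = (if i < i' then (lam i' : ℤ) else 0) := by
    intro i hi
    simp only [Finset.mem_Icc] at hi
    split_ifs with h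
    · rw [min_eq_right]
      exact_mod_cast hdec i i' hi.1 (le_of_lt h) hi'.2
    · rfl
  rw [Finset.sum_congr rfl step, ← Finset.sum_filter]
  have hf : (Finset.Icc 1 n).filter (fun i => i < i') = Finset.Icc 1 (i' - 1) := by
    ext a
    simp only [Finset.mem_filter, Finset.mem_Icc]
    omega
  rw [hf, Finset.sum_const, Nat.card_Icc, nsmul_eq_mul]
  have : i' - 1 + 1 - 1 = i' - 1 := by omega
  rw [this, Nat.cast_sub hi'.1, Nat.cast_one]

end CZaux

/-- `C(μ)` is invariant under adjacent transpositions of the parts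
of `μ` and equals `n(λ) = Σ_i (i-1) λ_i`, `λ` the weakly decreasing rearrangement. -/
theorem CZ_invariant_eq (n : ℕ) (μ : ℕ → ℕ) :
    (∀ k : ℕ, 1 ≤ k → k < n → CZ n (swapComp k μ) = CZ n μ) ∧
    (∀ lam : ℕ → ℕ,
      Multiset.map lam (Finset.Icc 1 n).val = Multiset.map μ (Finset.Icc 1 n).val →
      (∀ i j : ℕ, 1 ≤ i → i ≤ j → j ≤ n → lam j ≤ lam i) →
      CZ n μ = ∑ i ∈ Finset.Icc 1 n, ((i : ℤ) - 1) * (lam i : ℤ)) := by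
  constructor
  · intro k hk1 hkn
    have himg : (Finset.Icc 1 n).map (Equiv.swap k (k + 1)).toEmbedding
        = Finset.Icc 1 n := by
      ext m
      rw [Finset.mem_map_equiv, Equiv.symm_swap]
      simp only [Finset.mem_Icc, Equiv.swap_apply_def]
      split_ifs <;> omega
    have hm : Multiset.map (swapComp k μ) (Finset.Icc 1 n).val
        = Multiset.map μ (Finset.Icc 1 n).val := by
      conv_rhs => rw [← himg]
      rw [Finset.map_val, Multiset.map_map]
      rfl
    exact CZ_congr n (swapComp k μ) μ hm
  · intro lam hmul hdec
    rw [← CZ_congr n lam μ hmul]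
    exact CZ_decreasing n lam hdec
end
end

section
/- Suppose μ_i < μ_{i+1} and let s_i(μ) be μ with parts i and i+1 exchanged. Define s_i on boxes by s_i((j,k)) = (s_i(j), k). Then for every box u in dg'(μ) other than (i+1, μ_i + 1), one has a(s_i(u)) = a(u) (arm computed in dg'(s_i μ)), while for u = (i+1, μ_i + 1), a(s_i(u)) = a(u) + 1. Also l(s_i(u)) = l(u) for all u. -/
open Finset

noncomputable section
attribute [local instance] Classical.propDecidable

/-- Column predicate: column `b` contributes a box to the arm of `u`. -/
def colPred (μ : ℕ → ℕ) (u : ℕ × ℕ) (b : ℕ) : Prop :=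
  (b < u.1 ∧ u.2 ≤ μ b ∧ μ b ≤ μ u.1) ∨ (u.1 < b ∧ u.2 - 1 ≤ μ b ∧ μ b < μ u.1)

lemma armLen_eq_s15 (n : ℕ) (μ : ℕ → ℕ) (u : ℕ × ℕ) (hu2 : 1 ≤ u.2) :
    armLen n μ u = ((Finset.Icc 1 n).filter (colPred μ u)).card := by
  rw [armLen, armF]
  refine Finset.card_bij' (fun v _ => v.1)
    (fun b _ => (b, if b < u.1 then u.2 else u.2 - 1)) ?_ ?_ ?_ ?_
  · intro v hv
    rw [mem_filter] at hv
    obtain ⟨_, harm⟩ := hv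
    rw [mem_filter, mem_Icc]
    rcases harm with ⟨⟨h1, h2, _, h4⟩, hv2, hlt', hle⟩ | ⟨⟨h1, h2, h3⟩, hv2, hgt, hlt'⟩
    · exact ⟨⟨h1, h2⟩, Or.inl ⟨hlt', by omega, hle⟩⟩
    · exact ⟨⟨h1, h2⟩, Or.inr ⟨hgt, by omega, hlt'⟩⟩
  · intro b hb
    rw [mem_filter, mem_Icc] at hb
    obtain ⟨⟨hb1, hbn⟩, hc⟩ := hb
    rw [mem_filter]
    rcases hc with ⟨h1, h2, h3⟩ | ⟨h1, h2, h3⟩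
    · rw [if_pos h1]
      constructor
      · simp only [augF, mem_biUnion, mem_Icc, mem_image]
        exact ⟨b, ⟨hb1, hbn⟩, u.2, ⟨Nat.zero_le _, h2⟩, rfl⟩
      · exact Or.inl ⟨⟨hb1, hbn, hu2, h2⟩, rfl, h1, h3⟩
    · rw [if_neg (by omega)]
      constructor
      · simp only [augF, mem_biUnion, mem_Icc, mem_image]
        exact ⟨b, ⟨hb1, hbn⟩, u.2 - 1, ⟨Nat.zero_le _, h2⟩, rfl⟩
      · exact Or.inr ⟨⟨hb1, hbn, h2⟩, by omega, h1, h3⟩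
  · intro v hv
    rw [mem_filter] at hv
    rcases hv.2 with ⟨_, hv2, hlt', _⟩ | ⟨_, hv2, hgt, _⟩
    · rw [if_pos hlt']
      exact Prod.ext rfl hv2.symm
    · rw [if_neg (by omega)]
      exact Prod.ext rfl (by omega)
  · intro b _
    rfl

lemma swap_colPred (μ : ℕ → ℕ) (i : ℕ) (u : ℕ × ℕ) (b : ℕ) (hlt : μ i < μ (i + 1))
    (hja : u.2 ≤ μ u.1) (hex : ¬(u.1 = i + 1 ∧ b = i ∧ u.2 = μ i + 1)) :
    colPred (swapComp i μ) (swapBox i u) (Equiv.swap i (i + 1) b) ↔ colPred μ u b := by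
  obtain ⟨a, j⟩ := u
  dsimp only at hja hex ⊢
  have hb : swapComp i μ (Equiv.swap i (i + 1) b) = μ b := by
    simp [swapComp, Equiv.swap_apply_self]
  have ha : swapComp i μ (Equiv.swap i (i + 1) a) = μ a := by
    simp [swapComp, Equiv.swap_apply_self]
  have swi : Equiv.swap i (i + 1) i = i + 1 := Equiv.swap_apply_left _ _
  have swi1 : Equiv.swap i (i + 1) (i + 1) = i := Equiv.swap_apply_right _ _
  have sw : ∀ x : ℕ, x ≠ i → x ≠ i + 1 → Equiv.swap i (i + 1) x = x := fun x h1 h2 =>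
    Equiv.swap_apply_of_ne_of_ne h1 h2
  simp only [colPred, swapBox, hb, ha]
  rcases eq_or_ne a i with ha1 | ha1
  · rcases eq_or_ne b i with hb1 | hb1
    · rw [ha1, hb1, swi]; omega
    · rcases eq_or_ne b (i + 1) with hb2 | hb2
      · rw [ha1, hb2, swi, swi1]; omega
      · rw [ha1, swi, sw b hb1 hb2]; omega
  · rcases eq_or_ne a (i + 1) with ha2 | ha2
    · rcases eq_or_ne b i with hb1 | hb1
      · have hj : j ≠ μ i + 1 := fun h => hex ⟨ha2, hb1, h⟩
        rw [ha2] at hja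
        rw [ha2, hb1, swi, swi1]; omega
      · rcases eq_or_ne b (i + 1) with hb2 | hb2
        · rw [ha2, hb2, swi1]; omega
        · rw [ha2, swi1, sw b hb1 hb2]; omega
    · rcases eq_or_ne b i with hb1 | hb1
      · rw [hb1, swi, sw a ha1 ha2]; omega
      · rcases eq_or_ne b (i + 1) with hb2 | hb2
        · rw [hb2, swi1, sw a ha1 ha2]; omega
        · rw [sw a ha1 ha2, sw b hb1 hb2]

lemma swap_mem_bounds {i n b : ℕ} (hi : 1 ≤ i) (hin : i + 1 ≤ n) (hb1 : 1 ≤ b)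
    (hbn : b ≤ n) : 1 ≤ Equiv.swap i (i + 1) b ∧ Equiv.swap i (i + 1) b ≤ n := by
  rcases eq_or_ne b i with rfl | h1
  · rw [Equiv.swap_apply_left]; omega
  rcases eq_or_ne b (i + 1) with rfl | h2
  · rw [Equiv.swap_apply_right]; omega
  · rw [Equiv.swap_apply_of_ne_of_ne h1 h2]; exact ⟨hb1, hbn⟩

/-- if `μ_i < μ_{i+1}`, then `a(s_i(u)) = a(u)` for every box of
`dg'(μ)` other than `(i+1, μ_i + 1)`, where `a(s_i(u)) = a(u) + 1`; and
`l(s_i(u)) = l(u)` for all boxes. -/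
theorem swap_arm_leg (n : ℕ) (μ : ℕ → ℕ) (i : ℕ) (hi : 1 ≤ i) (hin : i + 1 ≤ n)
    (hlt : μ i < μ (i + 1)) (u : ℕ × ℕ) (hu : dgIn n μ u) :
    (u ≠ (i + 1, μ i + 1) →
      armLen n (swapComp i μ) (swapBox i u) = armLen n μ u) ∧
    (u = (i + 1, μ i + 1) →
      armLen n (swapComp i μ) (swapBox i u) = armLen n μ u + 1) ∧
    legLen (swapComp i μ) (swapBox i u) = legLen μ u := by
  obtain ⟨hu1, hun, hu2, huμ⟩ := hu
  have hleg : legLen (swapComp i μ) (swapBox i u) = legLen μ u := by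
    simp [legLen, swapComp, swapBox, Equiv.swap_apply_self]
  have hdg2 : (1 : ℕ) ≤ (swapBox i u).2 := hu2
  refine ⟨?_, ?_, hleg⟩
  · intro hne
    have hex : ∀ b : ℕ, ¬(u.1 = i + 1 ∧ b = i ∧ u.2 = μ i + 1) := by
      rintro b ⟨h1, _, h3⟩
      exact hne (Prod.ext h1 h3)
    rw [armLen_eq_s15 n μ u hu2, armLen_eq_s15 n _ _ hdg2]
    refine Finset.card_bij' (fun c _ => Equiv.swap i (i + 1) c)
      (fun b _ => Equiv.swap i (i + 1) b) ?_ ?_ ?_ ?_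
    · intro c hc
      rw [mem_filter, mem_Icc] at hc ⊢
      obtain ⟨⟨hc1, hcn⟩, hcol⟩ := hc
      refine ⟨swap_mem_bounds hi hin hc1 hcn, ?_⟩
      have := (swap_colPred μ i u (Equiv.swap i (i + 1) c) hlt huμ (hex _)).mp
      simpa [Equiv.swap_apply_self] using this (by simpa [Equiv.swap_apply_self] using hcol)
    · intro b hb
      rw [mem_filter, mem_Icc] at hb ⊢
      obtain ⟨⟨hb1, hbn⟩, hcol⟩ := hb
      exact ⟨swap_mem_bounds hi hin hb1 hbn,
        (swap_colPred μ i u b hlt huμ (hex _)).mpr hcol⟩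
    · intro c _; exact Equiv.swap_apply_self _ _ c
    · intro b _; exact Equiv.swap_apply_self _ _ b
  · intro h
    subst h
    dsimp only at hu2 huμ hun hu1 ⊢
    rw [armLen_eq_s15 n μ _ hu2, armLen_eq_s15 n _ _ hdg2]
    have hmem : i + 1 ∈ (Finset.Icc 1 n).filter
        (colPred (swapComp i μ) (swapBox i (i + 1, μ i + 1))) := by
      rw [mem_filter, mem_Icc]
      refine ⟨⟨by omega, hin⟩, Or.inr ?_⟩
      simp only [swapBox, Equiv.swap_apply_right, Equiv.swap_apply_left, swapComp]
      omega
    rw [← Finset.card_erase_add_one hmem]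
    congr 1
    refine Finset.card_bij' (fun c _ => Equiv.swap i (i + 1) c)
      (fun b _ => Equiv.swap i (i + 1) b) ?_ ?_ ?_ ?_
    · intro c hc
      rw [mem_erase, mem_filter, mem_Icc] at hc
      obtain ⟨hcne, ⟨hc1, hcn⟩, hcol⟩ := hc
      rw [mem_filter, mem_Icc]
      refine ⟨swap_mem_bounds hi hin hc1 hcn, ?_⟩
      have hex : ¬((i + 1 : ℕ) = i + 1 ∧ Equiv.swap i (i + 1) c = i ∧
          μ i + 1 = μ i + 1) := by
        rintro ⟨-, h2, -⟩
        exact hcne (by simpa using congrArg (Equiv.swap i (i + 1)) h2)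
      have := (swap_colPred μ i (i + 1, μ i + 1) (Equiv.swap i (i + 1) c) hlt
        (by simpa using Nat.succ_le_of_lt hlt) hex).mp
      simpa [Equiv.swap_apply_self] using this (by simpa [Equiv.swap_apply_self] using hcol)
    · intro b hb
      rw [mem_filter, mem_Icc] at hb
      obtain ⟨⟨hb1, hbn⟩, hcol⟩ := hb
      have hbne : b ≠ i := by
        rintro rfl
        rcases hcol with ⟨h1, h2, h3⟩ | ⟨h1, h2, h3⟩ <;> simp at h1 h2 h3
      rw [mem_erase, mem_filter, mem_Icc]
      have hex : ¬((i + 1 : ℕ) = i + 1 ∧ b = i ∧ μ i + 1 = μ i + 1) := by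
        rintro ⟨-, h2, -⟩; exact hbne h2
      refine ⟨?_, swap_mem_bounds hi hin hb1 hbn,
        (swap_colPred μ i (i + 1, μ i + 1) b hlt
          (by simpa using Nat.succ_le_of_lt hlt) hex).mpr hcol⟩
      intro h
      apply hbne
      have := congrArg (Equiv.swap i (i + 1)) h
      simpa [Equiv.swap_apply_self, Equiv.swap_apply_right] using this
    · intro c _; exact Equiv.swap_apply_self _ _ c
    · intro b _; exact Equiv.swap_apply_self _ _ b
end
end

section
/- Let σ be a filling of a finite diagram S with values in the signed alphabet 1 < 1̄ < 2 < 2̄ < … < n < n̄, and fix arm values a(u) and leg values l(u) for boxes u ∈ S with d(u) ∈ S. Grouping the sum over signed non-attacking fillings by the absolute value |σ|, one has the identity: Σ_{signed non-attacking σ} x^{|σ|} (−1)^{m(σ)} q^{maj(σ)} t^{|S| − p(σ) − inv(σ)} = Σ_{non-attacking τ : S → [n]} x^τ q^{maj(τ)} t^{−inv(τ)} ∏_{u,d(u)∈S, τ(u)=τ(d(u))} (1 − q^{l(u)+1} t^{a(u)+1}) ∏_{u∈S, τ(u)≠τ(d(u)) or d(u)∉S} (1−t). -/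
open Finset

noncomputable section
attribute [local instance] Classical.propDecidable

/-- The absolute value `|σ|(u) ∈ [n]` of a signed filling `σ : S → A(n)`
(value component shifted to `{1,…,n}`; `0` off `S`). -/
def svalS {n : ℕ} (S : Finset (ℕ × ℕ)) (σ : {u // u ∈ S} → Fin n × Bool)
    (u : ℕ × ℕ) : ℕ :=
  if h : u ∈ S then ((σ ⟨u, h⟩).1 : ℕ) + 1 else 0

/-- The sign of the entry of a signed filling (`true` = barred/negative). -/
def snegS {n : ℕ} (S : Finset (ℕ × ℕ)) (σ : {u // u ∈ S} → Fin n × Bool)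
    (u : ℕ × ℕ) : Bool :=
  if h : u ∈ S then (σ ⟨u, h⟩).2 else false

/-- `σ(u) > σ(v)` in the alphabet `1 < 1̄ < ⋯ < n < n̄`, with the modification
that a pair of equal negative entries also counts. -/
def sgtS {n : ℕ} (S : Finset (ℕ × ℕ)) (σ : {u // u ∈ S} → Fin n × Bool)
    (u v : ℕ × ℕ) : Prop :=
  svalS S σ v < svalS S σ u ∨ (svalS S σ u = svalS S σ v ∧ snegS S σ u = true)

/-- The descent set of a signed filling. -/
def desS {n : ℕ} (S : Finset (ℕ × ℕ)) (σ : {u // u ∈ S} → Fin n × Bool) :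
    Finset (ℕ × ℕ) :=
  S.filter (fun u => 1 ≤ u.2 ∧ dbox u ∈ S ∧ sgtS S σ u (dbox u))

/-- The inversion set of a signed filling. -/
def invS {n : ℕ} (S : Finset (ℕ × ℕ)) (σ : {u // u ∈ S} → Fin n × Bool) :
    Finset ((ℕ × ℕ) × (ℕ × ℕ)) :=
  (S ×ˢ S).filter (fun p => attacks p.1 p.2 ∧ rlt p.1 p.2 ∧ sgtS S σ p.1 p.2)

/-- A signed filling is non-attacking if `|σ|` is non-attacking. -/
def NonAttackingS {n : ℕ} (S : Finset (ℕ × ℕ)) (σ : {u // u ∈ S} → Fin n × Bool) :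
    Prop :=
  ∀ u v : ℕ × ℕ, u ∈ S → v ∈ S → attacks u v → svalS S σ u ≠ svalS S σ v

/-- An ordinary filling viewed as a signed filling with all entries positive. -/
def toSigned {n : ℕ} (S : Finset (ℕ × ℕ)) (τ : {u // u ∈ S} → Fin n) :
    {u // u ∈ S} → Fin n × Bool :=
  fun u => (τ u, false)

section Helpers

variable {n : ℕ}

/-- The "equal value below" predicate. -/
def Peq (S : Finset (ℕ × ℕ)) (τ : {u // u ∈ S} → Fin n) (u : ℕ × ℕ) : Prop :=
  1 ≤ u.2 ∧ dbox u ∈ S ∧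
    svalS S (toSigned S τ) u = svalS S (toSigned S τ) (dbox u)

lemma sval_pair (S : Finset (ℕ × ℕ)) (τ : {u // u ∈ S} → Fin n)
    (ε : {u // u ∈ S} → Bool) :
    svalS S (fun v => (τ v, ε v)) = svalS S (toSigned S τ) := rfl

lemma sneg_pair (S : Finset (ℕ × ℕ)) (τ : {u // u ∈ S} → Fin n)
    (ε : {u // u ∈ S} → Bool) (u : {u // u ∈ S}) :
    snegS S (fun v => (τ v, ε v)) ↑u = ε u := by
  unfold snegS
  rw [dif_pos u.2]

lemma inv_pair (S : Finset (ℕ × ℕ)) (τ : {u // u ∈ S} → Fin n)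
    (ε : {u // u ∈ S} → Bool) (hNA : NonAttackingS S (toSigned S τ)) :
    invS S (fun v => (τ v, ε v)) = invS S (toSigned S τ) := by
  unfold invS
  refine filter_congr fun p hp => ?_
  rw [mem_product] at hp
  constructor
  · rintro ⟨hat, hr, h | ⟨he, _⟩⟩
    · exact ⟨hat, hr, Or.inl h⟩
    · exact absurd he (hNA p.1 p.2 hp.1 hp.2 hat)
  · rintro ⟨hat, hr, h | ⟨he, _⟩⟩
    · exact ⟨hat, hr, Or.inl h⟩
    · exact absurd he (hNA p.1 p.2 hp.1 hp.2 hat)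

lemma des_sum (S : Finset (ℕ × ℕ)) (τ : {u // u ∈ S} → Fin n)
    (ε : {u // u ∈ S} → Bool) {M : Type} [AddCommMonoid M] (f : ℕ × ℕ → M) :
    ∑ u ∈ desS S (fun v => (τ v, ε v)), f u
      = ∑ u ∈ desS S (toSigned S τ), f u
        + ∑ u ∈ S.filter (fun u => Peq S τ u ∧
            snegS S (fun v => (τ v, ε v)) u = true), f u := by
  unfold desS Peq
  rw [sum_filter, sum_filter, sum_filter, ← sum_add_distrib]
  refine sum_congr rfl fun u hu => ?_
  have hsv : svalS S (fun v => (τ v, ε v)) = svalS S (toSigned S τ) := rfl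
  have hts : snegS S (toSigned S τ) u = false := by
    unfold snegS toSigned
    split <;> rfl
  unfold sgtS
  rw [hsv]
  by_cases h1 : 1 ≤ u.2 <;> by_cases h2 : dbox u ∈ S <;>
    by_cases hN : snegS S (fun v => (τ v, ε v)) u = true <;>
    rcases Nat.lt_trichotomy (svalS S (toSigned S τ) (dbox u))
      (svalS S (toSigned S τ) u) with h | h | h <;>
    simp_all <;> (repeat rw [if_neg (by omega)]) <;> simp

end Helpers

/-- Per-box factor. -/
def Gfac {F : Type} [Field F] (q t : F) (a l : ℕ × ℕ → ℕ) {n : ℕ}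
    (S : Finset (ℕ × ℕ)) (τ : {u // u ∈ S} → Fin n) (u : ℕ × ℕ) (b : Bool) : F :=
  if b = true then (if Peq S τ u then -(q ^ (l u + 1) * t ^ (a u + 1)) else -t) else 1

/-- summing over signed non-attacking fillings and grouping by
absolute value yields the product formula over ordinary non-attacking
fillings. -/
theorem signed_filling_identity (F : Type) [Field F] (n : ℕ)
    (S : Finset (ℕ × ℕ)) (a l : ℕ × ℕ → ℕ) (q t : F) (ht : t ≠ 0)
    (x : Fin n → F) :
    (∑ σ : ({u // u ∈ S} → Fin n × Bool),
      if NonAttackingS S σ then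
        (∏ u : {u // u ∈ S}, x (σ u).1) *
          (-1 : F) ^ (Finset.univ.filter
            (fun u : {u // u ∈ S} => (σ u).2 = true)).card *
          q ^ (∑ u ∈ desS S σ, (l u + 1)) *
          t ^ ((S.card : ℤ) -
              ((Finset.univ.filter
                  (fun u : {u // u ∈ S} => (σ u).2 = false)).card : ℤ) -
              ((invS S σ).card : ℤ) + ∑ u ∈ desS S σ, (a u : ℤ))
      else 0) =
    ∑ τ : ({u // u ∈ S} → Fin n),
      if NonAttackingS S (toSigned S τ) then
        (∏ u : {u // u ∈ S}, x (τ u)) *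
          q ^ (∑ u ∈ desS S (toSigned S τ), (l u + 1)) *
          t ^ ((∑ u ∈ desS S (toSigned S τ), (a u : ℤ)) -
              ((invS S (toSigned S τ)).card : ℤ)) *
          (∏ u ∈ S.filter (fun u => 1 ≤ u.2 ∧ dbox u ∈ S ∧
                svalS S (toSigned S τ) u = svalS S (toSigned S τ) (dbox u)),
              (1 - q ^ (l u + 1) * t ^ (a u + 1))) *
          (∏ u ∈ S.filter (fun u => ¬ (1 ≤ u.2 ∧ dbox u ∈ S ∧
                svalS S (toSigned S τ) u = svalS S (toSigned S τ) (dbox u))),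
              (1 - t))
      else 0 := by
  have he : ∀ (τ : {u // u ∈ S} → Fin n) (ε : {u // u ∈ S} → Bool),
      (Equiv.arrowProdEquivProdArrow {u // u ∈ S} (fun _ => Fin n) (fun _ => Bool)).symm (τ, ε)
        = fun v => (τ v, ε v) := fun τ ε => rfl
  rw [← Equiv.sum_comp ((Equiv.arrowProdEquivProdArrow {u // u ∈ S} (fun _ => Fin n) (fun _ => Bool)).symm)]
  rw [Fintype.sum_prod_type]
  refine Finset.sum_congr rfl fun τ _ => ?_
  simp only [he]
  by_cases hNA : NonAttackingS S (toSigned S τ)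
  case neg =>
    have hNA2 : ∀ ε : {u // u ∈ S} → Bool,
        ¬ NonAttackingS S (fun v => (τ v, ε v)) := fun ε => hNA
    rw [if_neg hNA]
    exact Finset.sum_eq_zero fun ε _ => if_neg (hNA2 ε)
  case pos =>
    rw [if_pos hNA]
    have hNA2 : ∀ ε : {u // u ∈ S} → Bool,
        NonAttackingS S (fun v => (τ v, ε v)) := fun ε => hNA
    have step1 : ∀ ε : {u // u ∈ S} → Bool,
        (if NonAttackingS S (fun v => (τ v, ε v)) then
          (∏ u : {u // u ∈ S}, x (τ u)) *
            (-1 : F) ^ (Finset.univ.filter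
              (fun u : {u // u ∈ S} => ε u = true)).card *
            q ^ (∑ u ∈ desS S (fun v => (τ v, ε v)), (l u + 1)) *
            t ^ ((S.card : ℤ) -
              ((Finset.univ.filter
                  (fun u : {u // u ∈ S} => ε u = false)).card : ℤ) -
              ((invS S (fun v => (τ v, ε v))).card : ℤ) +
              ∑ u ∈ desS S (fun v => (τ v, ε v)), (a u : ℤ))
        else 0)
        = ((∏ u : {u // u ∈ S}, x (τ u)) *
            q ^ (∑ u ∈ desS S (toSigned S τ), (l u + 1)) *
            t ^ ((∑ u ∈ desS S (toSigned S τ), (a u : ℤ)) -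
              ((invS S (toSigned S τ)).card : ℤ))) *
          ∏ u : {u // u ∈ S}, Gfac q t a l S τ ↑u (ε u) := by
      intro ε
      rw [if_pos (hNA2 ε)]
      rw [inv_pair S τ ε hNA]
      rw [des_sum S τ ε (fun u => l u + 1), des_sum S τ ε (fun u => (a u : ℤ))]
      have hcard : ((Finset.univ.filter
            (fun u : {u // u ∈ S} => ε u = false)).card : ℤ)
          = (S.card : ℤ) - ((Finset.univ.filter
            (fun u : {u // u ∈ S} => ε u = true)).card : ℤ) := by
        have h := Finset.card_filter_add_card_filter_not
          (s := (Finset.univ : Finset {u // u ∈ S})) (fun u => ε u = true)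
        have h2 : (Finset.univ.filter (fun u : {u // u ∈ S} => ¬ ε u = true))
            = Finset.univ.filter (fun u : {u // u ∈ S} => ε u = false) := by
          exact filter_congr fun u _ => by simp
        have h3 : (Finset.univ : Finset {u // u ∈ S}).card = S.card := by
          rw [Finset.card_univ, Fintype.card_coe]
        rw [h2, h3] at h
        omega
      rw [hcard]
      set c1 := (Finset.univ.filter
        (fun u : {u // u ∈ S} => ε u = true)).card with hc1
      set E := S.filter (fun u => Peq S τ u ∧
        snegS S (fun v => (τ v, ε v)) u = true) with hE
      set Sa := ∑ u ∈ E, a u with hSa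
      have hcast : ∑ u ∈ E, (a u : ℤ) = ((Sa : ℕ) : ℤ) := by
        rw [hSa]; push_cast; rfl
      have hz : (S.card : ℤ) - ((S.card : ℤ) - (c1 : ℤ)) -
            ((invS S (toSigned S τ)).card : ℤ) +
            ((∑ u ∈ desS S (toSigned S τ), (a u : ℤ)) + ∑ u ∈ E, (a u : ℤ))
          = ((∑ u ∈ desS S (toSigned S τ), (a u : ℤ)) -
              ((invS S (toSigned S τ)).card : ℤ)) + ((c1 + Sa : ℕ) : ℤ) := by
        rw [hcast]; push_cast; ring
      rw [hz, zpow_add₀ ht, zpow_natCast]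
      have hcc : c1 = (S.filter
          (fun u => snegS S (fun v => (τ v, ε v)) u = true)).card := by
        rw [hc1, Finset.card_filter, Finset.card_filter,
          ← Finset.sum_coe_sort S
            (fun u => if snegS S (fun v => (τ v, ε v)) u = true then 1 else 0)]
        exact Finset.sum_congr rfl fun u _ => by rw [sneg_pair]
      have hkey : ∏ u : {u // u ∈ S}, Gfac q t a l S τ ↑u (ε u)
          = (-1 : F) ^ c1 * q ^ (∑ u ∈ E, (l u + 1)) * t ^ (c1 + Sa) := by
        have h0 : ∀ u : {u // u ∈ S}, Gfac q t a l S τ ↑u (ε u)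
            = Gfac q t a l S τ ↑u (snegS S (fun v => (τ v, ε v)) ↑u) :=
          fun u => by rw [sneg_pair]
        rw [Finset.prod_congr rfl fun u _ => h0 u,
          Finset.prod_coe_sort S
            (fun u => Gfac q t a l S τ u (snegS S (fun v => (τ v, ε v)) u))]
        have hG : ∀ u ∈ S, Gfac q t a l S τ u (snegS S (fun v => (τ v, ε v)) u)
            = ((if snegS S (fun v => (τ v, ε v)) u = true then (-1 : F) else 1) *
                (if Peq S τ u ∧ snegS S (fun v => (τ v, ε v)) u = true
                  then q ^ (l u + 1) else 1)) *
              ((if snegS S (fun v => (τ v, ε v)) u = true then t else 1) *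
                (if Peq S τ u ∧ snegS S (fun v => (τ v, ε v)) u = true
                  then t ^ (a u) else 1)) := by
          intro u _
          unfold Gfac
          split_ifs <;> first | tauto | ring
        rw [Finset.prod_congr rfl hG, Finset.prod_mul_distrib,
          Finset.prod_mul_distrib, Finset.prod_mul_distrib]
        have hP1 : ∏ u ∈ S,
            (if snegS S (fun v => (τ v, ε v)) u = true then (-1 : F) else 1)
            = (-1 : F) ^ c1 := by
          rw [Finset.prod_ite, Finset.prod_const, Finset.prod_const_one,
            mul_one, hcc]
        have hP3 : ∏ u ∈ S,
            (if snegS S (fun v => (τ v, ε v)) u = true then t else 1)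
            = t ^ c1 := by
          rw [Finset.prod_ite, Finset.prod_const, Finset.prod_const_one,
            mul_one, hcc]
        have hP2 : ∏ u ∈ S,
            (if Peq S τ u ∧ snegS S (fun v => (τ v, ε v)) u = true
              then q ^ (l u + 1) else 1)
            = q ^ (∑ u ∈ E, (l u + 1)) := by
          rw [Finset.prod_ite, Finset.prod_const_one, mul_one,
            Finset.prod_pow_eq_pow_sum, hE]
        have hP4 : ∏ u ∈ S,
            (if Peq S τ u ∧ snegS S (fun v => (τ v, ε v)) u = true
              then t ^ (a u) else 1)
            = t ^ Sa := by
          rw [Finset.prod_ite, Finset.prod_const_one, mul_one,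
            Finset.prod_pow_eq_pow_sum, hSa, hE]
        rw [hP1, hP2, hP3, hP4, pow_add]
      rw [hkey, pow_add]
      ring
    rw [Finset.sum_congr rfl fun ε _ => step1 ε, ← Finset.mul_sum]
    have hint : ∑ ε : {u // u ∈ S} → Bool,
          ∏ u : {u // u ∈ S}, Gfac q t a l S τ ↑u (ε u)
        = ∏ u : {u // u ∈ S},
            ∑ b ∈ (Finset.univ : Finset Bool), Gfac q t a l S τ ↑u b := by
      rw [Finset.prod_univ_sum, Fintype.piFinset_univ]
    have hbool : ∀ u : ℕ × ℕ,
        (∑ b ∈ (Finset.univ : Finset Bool), Gfac q t a l S τ u b)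
        = if Peq S τ u then 1 - q ^ (l u + 1) * t ^ (a u + 1) else 1 - t := by
      intro u
      rw [show (∑ b ∈ (Finset.univ : Finset Bool), Gfac q t a l S τ u b)
          = Gfac q t a l S τ u true + Gfac q t a l S τ u false from
        Fintype.sum_bool _]
      unfold Gfac
      split_ifs <;> first | tauto | ring
    have hb2 : (∏ u : {u // u ∈ S},
          ∑ b ∈ (Finset.univ : Finset Bool), Gfac q t a l S τ ↑u b)
        = ∏ u : {u // u ∈ S},
            (if Peq S τ ↑u then 1 - q ^ (l ↑u + 1) * t ^ (a ↑u + 1)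
              else 1 - t) :=
      Finset.prod_congr rfl fun u _ => hbool ↑u
    rw [hint, hb2]
    rw [Finset.prod_coe_sort S
      (fun u => if Peq S τ u then 1 - q ^ (l u + 1) * t ^ (a u + 1) else 1 - t)]
    rw [Finset.prod_ite]
    have hf1 : S.filter (fun u => Peq S τ u)
        = S.filter (fun u => 1 ≤ u.2 ∧ dbox u ∈ S ∧
            svalS S (toSigned S τ) u = svalS S (toSigned S τ) (dbox u)) :=
      filter_congr fun u _ => Iff.rfl
    have hf2 : S.filter (fun u => ¬ Peq S τ u)
        = S.filter (fun u => ¬ (1 ≤ u.2 ∧ dbox u ∈ S ∧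
            svalS S (toSigned S τ) u = svalS S (toSigned S τ) (dbox u))) :=
      filter_congr fun u _ => Iff.rfl
    rw [hf1, hf2]
    ring
end
end
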